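/- arXiv:0706.2907 — 3 statements merged into one kernel-verified Lean document; each statement's English description precedes it below -/
import Mathlib

section
/- (Hayashi–Nagaoka operator inequality) Let Π and Λ be operators on a finite-dimensional Hilbert space with 0 ≤ Π ≤ 1 and Π ≤ Λ. Then 1 - Λ^{-1/2} Π Λ^{-1/2} ≤ 2(1 - Π) + 4(Λ - Π), where Λ^{-1/2} denotes the square root of the Moore–Penrose pseudoinverse of Λ. -/
open Matrix BigOperators ComplexOrder

/-- `Λ^{-1/2}`: the square root of the Moore–Penrose pseudoinverse of a Hermitian matrix,
defined as zero on the kernel. -/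
noncomputable def pinvSqrt {n : Type*} [Fintype n] [DecidableEq n] {Λ : Matrix n n ℂ}
    (hΛ : Λ.IsHermitian) : Matrix n n ℂ :=
  hΛ.cfc fun x => (Real.sqrt x)⁻¹

namespace HNAux

variable {n : Type*} [Fintype n] [DecidableEq n] {Λ : Matrix n n ℂ} (hΛ : Λ.IsHermitian)

lemma cfc_mul (f g : ℝ → ℝ) :
    hΛ.cfc f * hΛ.cfc g = hΛ.cfc fun x => f x * g x := by
  unfold Matrix.IsHermitian.cfc
  simp only [Unitary.conjStarAlgAut_apply]
  have h : ∀ (a b c d e f : Matrix n n ℂ),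
      (a * b * c) * (d * e * f) = a * (b * (c * d) * e) * f := by
    intros; simp only [mul_assoc]
  rw [h]
  simp only [SetLike.coe_mem, Unitary.star_mul_self_of_mem, mul_one, diagonal_mul_diagonal]
  congr 2
  funext i j
  by_cases hij : i = j <;> simp [Matrix.diagonal_apply, hij, Function.comp]

lemma cfc_congr {f g : ℝ → ℝ} (h : ∀ i, f (hΛ.eigenvalues i) = g (hΛ.eigenvalues i)) :
    hΛ.cfc f = hΛ.cfc g := by
  unfold Matrix.IsHermitian.cfc
  simp only [Unitary.conjStarAlgAut_apply]
  congr 2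
  funext i j
  by_cases hij : i = j <;> simp [Matrix.diagonal_apply, hij, Function.comp, h]

lemma cfc_herm (f : ℝ → ℝ) : (hΛ.cfc f).IsHermitian := by
  unfold Matrix.IsHermitian.cfc
  simp only [Unitary.conjStarAlgAut_apply]
  rw [Matrix.star_eq_conjTranspose]
  apply Matrix.isHermitian_mul_mul_conjTranspose
  apply Matrix.isHermitian_diagonal_of_self_adjoint
  funext i
  simp [Pi.star_def, Function.comp]

lemma cfc_psd (f : ℝ → ℝ) (h : ∀ i, 0 ≤ f (hΛ.eigenvalues i)) :
    (hΛ.cfc f).PosSemidef := by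
  unfold Matrix.IsHermitian.cfc
  simp only [Unitary.conjStarAlgAut_apply]
  rw [Matrix.star_eq_conjTranspose]
  refine Matrix.PosSemidef.mul_mul_conjTranspose_same ?_ _
  refine Matrix.PosSemidef.diagonal fun i => ?_
  simpa using h i

lemma cfc_id : hΛ.cfc id = Λ := by
  unfold Matrix.IsHermitian.cfc
  exact hΛ.spectral_theorem.symm

lemma cfc_one : hΛ.cfc (fun _ => 1) = 1 := by
  unfold Matrix.IsHermitian.cfc
  have : Matrix.diagonal (RCLike.ofReal ∘ (fun _ : ℝ => (1:ℝ)) ∘ hΛ.eigenvalues) =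
      (1 : Matrix n n ℂ) := by
    simp [Function.comp_def, Matrix.diagonal_one]
  rw [Unitary.conjStarAlgAut_apply, this, mul_one]
  exact (Matrix.mem_unitaryGroup_iff).mp (hΛ.eigenvectorUnitary).2

lemma cfc_add (f g : ℝ → ℝ) :
    hΛ.cfc f + hΛ.cfc g = hΛ.cfc fun x => f x + g x := by
  unfold Matrix.IsHermitian.cfc
  simp only [Unitary.conjStarAlgAut_apply]
  rw [← add_mul, ← mul_add, Matrix.diagonal_add]
  congr 2
  funext i j
  by_cases hij : i = j <;> simp [Matrix.diagonal_apply, hij, Function.comp]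

lemma cfc_mul3 (f1 f2 : ℝ → ℝ) :
    hΛ.cfc f1 * Λ * hΛ.cfc f2 = hΛ.cfc fun x => f1 x * x * f2 x := by
  have h1 : hΛ.cfc f1 * Λ * hΛ.cfc f2 = hΛ.cfc f1 * hΛ.cfc id * hΛ.cfc f2 := by
    rw [cfc_id]
  rw [h1, cfc_mul, cfc_mul]
  exact cfc_congr hΛ fun i => rfl

lemma psd_zero_of_add {A B : Matrix n n ℂ} (hA : A.PosSemidef) (hB : B.PosSemidef)
    (h : A + B = 0) : A = 0 := by
  have h' : ∀ v : n → ℂ, A *ᵥ v = 0 := by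
    intro v
    have ha := hA.dotProduct_mulVec_nonneg v
    have hb := hB.dotProduct_mulVec_nonneg v
    have hsum : star v ⬝ᵥ A *ᵥ v + star v ⬝ᵥ B *ᵥ v = 0 := by
      rw [← dotProduct_add, ← add_mulVec, h, zero_mulVec, dotProduct_zero]
    have ha0 : star v ⬝ᵥ A *ᵥ v = 0 := by
      refine le_antisymm ?_ ha
      have : star v ⬝ᵥ A *ᵥ v = -(star v ⬝ᵥ B *ᵥ v) := eq_neg_of_add_eq_zero_left hsum
      rw [this]
      exact neg_nonpos.mpr hb
    exact (hA.dotProduct_mulVec_zero_iff v).mp ha0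
  ext i j
  have := congrFun (h' (Pi.single j 1)) i
  simpa using this

lemma real_m_id_m {x : ℝ} (hx : 0 ≤ x) :
    (Real.sqrt x)⁻¹ * x * (Real.sqrt x)⁻¹ = if x = 0 then 0 else 1 := by
  by_cases h : x = 0
  · simp [h]
  · rw [if_neg h]
    have e : (Real.sqrt x)⁻¹ * x * (Real.sqrt x)⁻¹ = x / (Real.sqrt x * Real.sqrt x) := by
      rw [div_eq_mul_inv, mul_inv]; ring
    rw [e, Real.mul_self_sqrt hx, div_self h]

lemma real_m_id_g {x : ℝ} (hx : 0 ≤ x) :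
    (Real.sqrt x)⁻¹ * x * (if x = 0 then 0 else 1) = Real.sqrt x := by
  by_cases h : x = 0
  · simp [h]
  · rw [if_neg h, mul_one, inv_mul_eq_div, Real.div_sqrt]

lemma real_g_id_m {x : ℝ} (hx : 0 ≤ x) :
    (if x = 0 then 0 else 1) * x * (Real.sqrt x)⁻¹ = Real.sqrt x := by
  by_cases h : x = 0
  · simp [h]
  · rw [if_neg h, one_mul, ← div_eq_mul_inv, Real.div_sqrt]

lemma real_g_id_g (x : ℝ) : (if x = 0 then 0 else 1) * x * (if x = 0 then 0 else 1) = x := by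
  by_cases h : x = 0 <;> simp [h]

end HNAux

/-- Hayashi–Nagaoka operator inequality: if `0 ≤ Π ≤ 1` and `Π ≤ Λ` then
`1 - Λ^{-1/2} Π Λ^{-1/2} ≤ 2(1 - Π) + 4(Λ - Π)` in the Loewner order. -/
theorem hayashi_nagaoka {n : Type*} [Fintype n] [DecidableEq n]
    {P Λ : Matrix n n ℂ} (hP : P.PosSemidef) (hP1 : ((1 : Matrix n n ℂ) - P).PosSemidef)
    (hΛP : (Λ - P).PosSemidef) (hΛ : Λ.IsHermitian) :
    ((2 : ℂ) • ((1 : Matrix n n ℂ) - P) + (4 : ℂ) • (Λ - P)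
      - ((1 : Matrix n n ℂ) - pinvSqrt hΛ * P * pinvSqrt hΛ)).PosSemidef := by
  unfold pinvSqrt
  have hΛpsd : Λ.PosSemidef := by
    have h := hΛP.add hP
    have e : Λ - P + P = Λ := by abel
    rwa [e] at h
  have hd : ∀ i, 0 ≤ hΛ.eigenvalues i := fun i => hΛpsd.eigenvalues_nonneg i
  -- relations among cfc matrices
  have rel1 : hΛ.cfc (fun x => (Real.sqrt x)⁻¹) * Λ * hΛ.cfc (fun x => (Real.sqrt x)⁻¹)
      = hΛ.cfc (fun x : ℝ => if x = 0 then 0 else 1) := by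
    rw [HNAux.cfc_mul3]
    exact HNAux.cfc_congr hΛ fun i => HNAux.real_m_id_m (hd i)
  have rel2 : hΛ.cfc (fun x => (Real.sqrt x)⁻¹) * Λ * hΛ.cfc (fun x : ℝ => if x = 0 then 0 else 1)
      = hΛ.cfc Real.sqrt := by
    rw [HNAux.cfc_mul3]
    exact HNAux.cfc_congr hΛ fun i => HNAux.real_m_id_g (hd i)
  have rel3 : hΛ.cfc (fun x : ℝ => if x = 0 then 0 else 1) * Λ * hΛ.cfc (fun x => (Real.sqrt x)⁻¹)
      = hΛ.cfc Real.sqrt := by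
    rw [HNAux.cfc_mul3]
    exact HNAux.cfc_congr hΛ fun i => HNAux.real_g_id_m (hd i)
  have rel4 : hΛ.cfc (fun x : ℝ => if x = 0 then 0 else 1) * Λ
        * hΛ.cfc (fun x : ℝ => if x = 0 then 0 else 1) = Λ := by
    rw [HNAux.cfc_mul3]
    have h := HNAux.cfc_congr hΛ (f := fun x : ℝ =>
        (if x = 0 then 0 else 1) * x * (if x = 0 then 0 else 1)) (g := id)
      fun i => HNAux.real_g_id_g _
    rw [h, HNAux.cfc_id]
  have relPiΛ : hΛ.cfc (fun x : ℝ => if x = 0 then 0 else 1) * Λ = Λ := by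
    have h1 : hΛ.cfc (fun x : ℝ => if x = 0 then 0 else 1) * Λ
        = hΛ.cfc (fun x : ℝ => if x = 0 then 0 else 1) * hΛ.cfc id := by rw [HNAux.cfc_id]
    rw [h1, HNAux.cfc_mul]
    have h2 := HNAux.cfc_congr hΛ (f := fun x : ℝ => (if x = 0 then 0 else 1) * id x) (g := id)
      fun i => by by_cases h : hΛ.eigenvalues i = 0 <;> simp [h]
    rw [h2, HNAux.cfc_id]
  have hRR : hΛ.cfc Real.sqrt * hΛ.cfc Real.sqrt = Λ := by
    rw [HNAux.cfc_mul]
    have h2 := HNAux.cfc_congr hΛ (f := fun x : ℝ => Real.sqrt x * Real.sqrt x) (g := id)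
      fun i => Real.mul_self_sqrt (hd i)
    rw [h2, HNAux.cfc_id]
  -- abbreviations
  set M : Matrix n n ℂ := hΛ.cfc (fun x => (Real.sqrt x)⁻¹) with hMdef
  set Pi : Matrix n n ℂ := hΛ.cfc (fun x : ℝ => if x = 0 then 0 else 1) with hPidef
  set R : Matrix n n ℂ := hΛ.cfc Real.sqrt with hRdef
  have hMherm : M.IsHermitian := HNAux.cfc_herm hΛ _
  have hPiherm : Pi.IsHermitian := HNAux.cfc_herm hΛ _
  have hRherm : R.IsHermitian := HNAux.cfc_herm hΛ _
  have hRpsd : R.PosSemidef := HNAux.cfc_psd hΛ _ fun i => Real.sqrt_nonneg _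
  -- 1 - Pi is PSD
  have hKeq : (1 : Matrix n n ℂ) - Pi = hΛ.cfc (fun x : ℝ => 1 - if x = 0 then 0 else 1) := by
    have h := HNAux.cfc_add hΛ (fun x : ℝ => 1 - if x = 0 then 0 else 1)
      (fun x : ℝ => if x = 0 then 0 else 1)
    have h2 : (fun x : ℝ => (1 - if x = 0 then 0 else 1) + if x = 0 then 0 else 1)
        = fun _ : ℝ => (1:ℝ) := by funext x; ring
    rw [h2, HNAux.cfc_one] at h
    rw [← h]
    abel
  have hKpsd : ((1 : Matrix n n ℂ) - Pi).PosSemidef := by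
    rw [hKeq]
    exact HNAux.cfc_psd hΛ _ fun i => by by_cases h : hΛ.eigenvalues i = 0 <;> simp [h]
  have hKherm : ((1 : Matrix n n ℂ) - Pi).IsHermitian := hKpsd.1
  -- support facts : P * Pi = P, Pi * P = P
  have relKK : ((1 : Matrix n n ℂ) - Pi) * Λ * ((1 : Matrix n n ℂ) - Pi) = 0 := by
    rw [sub_mul, one_mul, relPiΛ, sub_self, zero_mul]
  have hKSK : ((1 : Matrix n n ℂ) - Pi) * P * ((1 : Matrix n n ℂ) - Pi) = 0 := by
    have hA1 : (((1 : Matrix n n ℂ) - Pi) * P * ((1 : Matrix n n ℂ) - Pi)).PosSemidef := by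
      have h := hP.mul_mul_conjTranspose_same ((1 : Matrix n n ℂ) - Pi)
      rwa [hKherm.eq] at h
    have hA2 : (((1 : Matrix n n ℂ) - Pi) * (Λ - P) * ((1 : Matrix n n ℂ) - Pi)).PosSemidef := by
      have h := hΛP.mul_mul_conjTranspose_same ((1 : Matrix n n ℂ) - Pi)
      rwa [hKherm.eq] at h
    refine HNAux.psd_zero_of_add hA1 hA2 ?_
    have e : ((1 : Matrix n n ℂ) - Pi) * P * ((1 : Matrix n n ℂ) - Pi)
        + ((1 : Matrix n n ℂ) - Pi) * (Λ - P) * ((1 : Matrix n n ℂ) - Pi)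
        = ((1 : Matrix n n ℂ) - Pi) * Λ * ((1 : Matrix n n ℂ) - Pi) := by noncomm_ring
    rw [e, relKK]
  obtain ⟨W0, hW0herm, hW0sq⟩ : ∃ W0 : Matrix n n ℂ, W0.IsHermitian ∧ W0 * W0 = P :=
    ⟨hP.1.cfc Real.sqrt, HNAux.cfc_herm hP.1 _, by
      rw [HNAux.cfc_mul, HNAux.cfc_congr hP.1 (g := id) fun i => Real.mul_self_sqrt (hP.eigenvalues_nonneg i),
        HNAux.cfc_id]⟩
  have hSPi : P * Pi = P := by
    have hfac : ((1 : Matrix n n ℂ) - Pi) * P * ((1 : Matrix n n ℂ) - Pi)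
        = (W0 * ((1 : Matrix n n ℂ) - Pi))ᴴ * (W0 * ((1 : Matrix n n ℂ) - Pi)) := by
      rw [conjTranspose_mul, hW0herm.eq, hKherm.eq, ← hW0sq]
      noncomm_ring
    rw [hfac] at hKSK
    have hWK : W0 * ((1 : Matrix n n ℂ) - Pi) = 0 := conjTranspose_mul_self_eq_zero.mp hKSK
    have hPK : P * ((1 : Matrix n n ℂ) - Pi) = 0 := by
      rw [← hW0sq, mul_assoc, hWK, mul_zero]
    rw [mul_sub, mul_one] at hPK
    exact (sub_eq_zero.mp hPK).symm
  have hPiS : Pi * P = P := by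
    have : Pi * P = (P * Pi)ᴴ := by rw [conjTranspose_mul, hP.1.eq, hPiherm.eq]
    rw [this, hSPi, hP.1.eq]
  -- Λ - P * P is PSD
  have hSS : (P - P * P).PosSemidef := by
    have h := hP1.mul_mul_conjTranspose_same W0
    rw [hW0herm.eq] at h
    have e : W0 * ((1 : Matrix n n ℂ) - P) * W0 = P - P * P := by
      rw [← hW0sq]; noncomm_ring
    rwa [e] at h
  have hΛSS : (Λ - P * P).PosSemidef := by
    have h := hΛP.add hSS
    have e : Λ - P + (P - P * P) = Λ - P * P := by abel
    rwa [e] at h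
  -- R - P is PSD (operator monotonicity argument)
  have hRS : (R - P).PosSemidef := by
    have hXh : (R - P).IsHermitian := hRherm.sub hP.1
    refine hXh.posSemidef_iff_eigenvalues_nonneg.mpr fun i => ?_
    by_contra hneg
    push_neg at hneg
    set lam : ℝ := hXh.eigenvalues i with hlam
    set v : n → ℂ := ⇑(hXh.eigenvectorBasis i) with hv
    have hvec : (R - P) *ᵥ v = (lam : ℂ) • v := by
      have h := hXh.mulVec_eigenvectorBasis i
      rw [← hv, ← hlam] at h
      rw [h]
      funext j
      simp [Complex.real_smul]
    have ha := hRpsd.dotProduct_mulVec_nonneg v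
    have hb := hP.dotProduct_mulVec_nonneg v
    have h0 := hΛSS.dotProduct_mulVec_nonneg v
    have hdecomp : Λ - P * P = R * (R - P) + (R - P) * P := by
      rw [mul_sub, sub_mul, hRR, sub_add_sub_cancel]
    rw [hdecomp] at h0
    have e1 : star v ⬝ᵥ (R * (R - P)) *ᵥ v = (lam : ℂ) * (star v ⬝ᵥ R *ᵥ v) := by
      rw [← mulVec_mulVec, hvec, mulVec_smul, dotProduct_smul, smul_eq_mul]
    have e2 : star v ⬝ᵥ ((R - P) * P) *ᵥ v = (lam : ℂ) * (star v ⬝ᵥ P *ᵥ v) := by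
      rw [← mulVec_mulVec, dotProduct_mulVec]
      have hsv : star v ᵥ* (R - P) = star ((R - P) *ᵥ v) := by
        rw [star_mulVec, hXh.eq]
      rw [hsv, hvec, star_smul, smul_dotProduct]
      simp [Complex.star_def, Complex.conj_ofReal, smul_eq_mul]
    rw [add_mulVec, dotProduct_add, e1, e2, ← mul_add] at h0
    have hab : 0 ≤ star v ⬝ᵥ R *ᵥ v + star v ⬝ᵥ P *ᵥ v := add_nonneg ha hb
    have hlamneg : (lam : ℂ) < 0 := by exact_mod_cast hneg
    have habz : star v ⬝ᵥ R *ᵥ v + star v ⬝ᵥ P *ᵥ v = 0 := by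
      have h1 : 0 ≤ -((lam : ℂ) * (star v ⬝ᵥ R *ᵥ v + star v ⬝ᵥ P *ᵥ v)) := by
        rw [← neg_mul]
        exact mul_nonneg (neg_nonneg.mpr hlamneg.le) hab
      have hz : (lam : ℂ) * (star v ⬝ᵥ R *ᵥ v + star v ⬝ᵥ P *ᵥ v) = 0 :=
        le_antisymm (neg_nonneg.mp h1) h0
      rcases mul_eq_zero.mp hz with h | h
      · exact absurd (Complex.ofReal_eq_zero.mp h) (ne_of_lt hneg)
      · exact h
    have ha0 : star v ⬝ᵥ R *ᵥ v = 0 := by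
      refine le_antisymm ?_ ha
      have : star v ⬝ᵥ R *ᵥ v = -(star v ⬝ᵥ P *ᵥ v) := eq_neg_of_add_eq_zero_left habz
      rw [this]; exact neg_nonpos.mpr hb
    have hb0 : star v ⬝ᵥ P *ᵥ v = 0 := by
      rw [ha0, zero_add] at habz; exact habz
    have hRv : R *ᵥ v = 0 := (hRpsd.dotProduct_mulVec_zero_iff v).mp ha0
    have hPv : P *ᵥ v = 0 := (hP.dotProduct_mulVec_zero_iff v).mp hb0
    have hlv : (lam : ℂ) • v = 0 := by
      rw [← hvec, sub_mulVec, hRv, hPv, sub_zero]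
    have hv0 : v = 0 := by
      rcases smul_eq_zero.mp hlv with h | h
      · exact absurd (Complex.ofReal_eq_zero.mp h) (ne_of_lt hneg)
      · exact h
    have hnorm := hXh.eigenvectorBasis.orthonormal.1 i
    have hz : ∀ j, hXh.eigenvectorBasis i j = 0 := fun j => congrFun hv0 j
    rw [EuclideanSpace.norm_eq] at hnorm
    simp [hz] at hnorm
  -- assembling
  have rel1' : M * (Λ * M) = Pi := by rw [← mul_assoc]; exact rel1
  have rel2' : M * (Λ * Pi) = R := by rw [← mul_assoc]; exact rel2
  have rel3' : Pi * (Λ * M) = R := by rw [← mul_assoc]; exact rel3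
  have rel4' : Pi * (Λ * Pi) = Λ := by rw [← mul_assoc]; exact rel4
  have relS1 : M * (P * Pi) = M * P := by rw [hSPi]
  have relS2 : Pi * (P * M) = P * M := by rw [← mul_assoc, hPiS]
  have relS3 : Pi * (P * Pi) = P := by rw [hSPi, hPiS]
  have hMPiherm : (M - Pi).IsHermitian := hMherm.sub hPiherm
  have hJherm : (M - Pi - Pi).IsHermitian := hMPiherm.sub hPiherm
  have hD : ((M - Pi) * P * (M - Pi)).PosSemidef := by
    have h := hP.mul_mul_conjTranspose_same (M - Pi)
    rwa [hMPiherm.eq] at h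
  have hF : ((M - Pi - Pi) * (Λ - P) * (M - Pi - Pi)).PosSemidef := by
    have h := hΛP.mul_mul_conjTranspose_same (M - Pi - Pi)
    rwa [hJherm.eq] at h
  have key : (2 : ℂ) • ((1 : Matrix n n ℂ) - P) + (4 : ℂ) • (Λ - P)
      - ((1 : Matrix n n ℂ) - M * P * M)
      = (((1 : Matrix n n ℂ) - Pi) + (((R - P) + (R - P)) + ((R - P) + (R - P))))
        + (((M - Pi) * P * (M - Pi) + (M - Pi) * P * (M - Pi))
          + (M - Pi - Pi) * (Λ - P) * (M - Pi - Pi)) := by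
    have e2 : (2 : ℂ) • ((1 : Matrix n n ℂ) - P) = (1 - P) + (1 - P) := two_smul ℂ _
    have e4 : (4 : ℂ) • (Λ - P) = ((Λ - P) + (Λ - P)) + ((Λ - P) + (Λ - P)) := by
      rw [show (4 : ℂ) = 2 + 2 by norm_num, add_smul, two_smul]
    rw [e2, e4]
    simp only [mul_sub, sub_mul, mul_one, one_mul, mul_assoc, rel1', rel2', rel3', rel4',
      relS1, relS2, relS3]
    abel
  rw [key]
  exact (hKpsd.add ((hRS.add hRS).add (hRS.add hRS))).add ((hD.add hD).add hF)
end

section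
/- (Entanglement fidelity bound for assisted channel simulation) Let K, Q, L, L' be finite-dimensional systems, |Ψ⟩ a pure state on L⊗L', ℰ: KL → Q a quantum channel (CPTP map), and 𝒟: QL' → K a quantum channel. Define 𝒩(ρ) = 𝒟((ℰ ⊗ id_{L'})(ρ ⊗ Ψ)) for density matrices ρ on K. Then for a maximally entangled state |Φ⟩ on K'⊗K (with K' ≅ K), the entanglement fidelity satisfies ⟨Φ| (id_{K'} ⊗ 𝒩)(|Φ⟩⟨Φ|) |Φ⟩ ≤ dim(Q)/dim(K). -/
open Matrix Kronecker BigOperators Finset ComplexConjugate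

private lemma normSq_sum_le {α : Type*} [Fintype α] (f : α → ℂ) :
    Complex.normSq (∑ x, f x) ≤ (Fintype.card α : ℝ) * ∑ x, Complex.normSq (f x) := by
  have h1 : ‖∑ x, f x‖ ≤ ∑ x, ‖f x‖ := by
    simpa using norm_sum_le (Finset.univ : Finset α) f
  have h2 : (∑ x, ‖f x‖) ^ 2 ≤ (Fintype.card α : ℝ) * ∑ x, ‖f x‖ ^ 2 := by
    simpa using sq_sum_le_card_mul_sum_sq (s := (Finset.univ : Finset α))
      (f := fun x => ‖f x‖)
  calc Complex.normSq (∑ x, f x) = ‖∑ x, f x‖ ^ 2 := (Complex.sq_norm _).symm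
    _ ≤ (∑ x, ‖f x‖) ^ 2 := by
        exact pow_le_pow_left₀ (norm_nonneg _) h1 2
    _ ≤ (Fintype.card α : ℝ) * ∑ x, ‖f x‖ ^ 2 := h2
    _ = (Fintype.card α : ℝ) * ∑ x, Complex.normSq (f x) := by simp [Complex.sq_norm]

private lemma iso_collapse {κ α : Type*} [Fintype κ] [Fintype α] [DecidableEq α]
    (v : κ → α → ℂ)
    (hv : ∀ x y : α, ∑ m, conj (v m x) * v m y = if x = y then 1 else 0)
    (f g : α → ℂ) :
    ∑ m, conj (∑ x, v m x * f x) * (∑ y, v m y * g y)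
      = ∑ x, conj (f x) * g x := by
  have step1 : ∀ m, conj (∑ x, v m x * f x) * (∑ y, v m y * g y)
      = ∑ x, ∑ y, (conj (f x) * g y) * (conj (v m x) * v m y) := by
    intro m
    rw [map_sum, Finset.sum_mul_sum]
    refine Finset.sum_congr rfl fun x _ => Finset.sum_congr rfl fun y _ => ?_
    rw [_root_.map_mul]; ring
  calc ∑ m, conj (∑ x, v m x * f x) * (∑ y, v m y * g y)
      = ∑ m, ∑ x, ∑ y, (conj (f x) * g y) * (conj (v m x) * v m y) :=
        Finset.sum_congr rfl fun m _ => step1 m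
    _ = ∑ x, ∑ y, ∑ m, (conj (f x) * g y) * (conj (v m x) * v m y) := by
        rw [Finset.sum_comm]
        exact Finset.sum_congr rfl fun x _ => Finset.sum_comm
    _ = ∑ x, ∑ y, (conj (f x) * g y) * (if x = y then 1 else 0) := by
        refine Finset.sum_congr rfl fun x _ => Finset.sum_congr rfl fun y _ => ?_
        rw [← Finset.mul_sum, hv]
    _ = ∑ x, conj (f x) * g x := by
        simp [mul_ite, Finset.sum_ite_eq]

private lemma sum_comm3 {α β γ M : Type*} [Fintype α] [Fintype β] [Fintype γ]
    [AddCommMonoid M] (f : α → β → γ → M) :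
    ∑ a, ∑ b, ∑ c, f a b c = ∑ c, ∑ b, ∑ a, f a b c := by
  calc ∑ a, ∑ b, ∑ c, f a b c = ∑ b, ∑ a, ∑ c, f a b c := Finset.sum_comm
    _ = ∑ b, ∑ c, ∑ a, f a b c := Finset.sum_congr rfl fun b _ => Finset.sum_comm
    _ = ∑ c, ∑ b, ∑ a, f a b c := Finset.sum_comm

private noncomputable def dotHom {n m : Type*} [Fintype n] [Fintype m] (u : m → ℂ) (v : n → ℂ) :
    Matrix m n ℂ →+ ℂ where
  toFun M := u ⬝ᵥ (M *ᵥ v)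
  map_zero' := by simp
  map_add' A B := by simp [Matrix.add_mulVec, dotProduct_add]
section Main

variable {K L L' Q : Type*} [Fintype K] [Fintype L] [Fintype L'] [Fintype Q]
    [DecidableEq K] [DecidableEq L] [DecidableEq L'] [DecidableEq Q]
    {ι ι' : Type*} [Fintype ι] [Fintype ι']

/-- The Kraus operators of the combined channel, as functions of the intermediate
`Q`-indices: `Sf D E Ψ j q i q'` contracts the `D`-side at `q` and the `E`-side at `q'`. -/
private noncomputable def Sf (D : ι' → Matrix K (Q × L') ℂ) (E : ι → Matrix Q (K × L) ℂ)
    (Ψ : L × L' → ℂ) (j : ι') (q : Q) (i : ι) (q' : Q) : ℂ :=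
  ∑ u : K × L, E i q' u * ∑ l', D j u.1 (q, l') * Ψ (u.2, l')

private noncomputable def hdf (D : ι' → Matrix K (Q × L') ℂ) (Ψ : L × L' → ℂ)
    (j : ι') (q : Q) (u : K × L) : ℂ :=
  ∑ l', D j u.1 (q, l') * Ψ (u.2, l')

private noncomputable def ff (E : ι → Matrix Q (K × L) ℂ) (Ψ : L × L' → ℂ)
    (i : ι) (k' : K) (x : Q × L') : ℂ :=
  ∑ l, E i x.1 (k', l) * Ψ (l, x.2)

variable (D : ι' → Matrix K (Q × L') ℂ) (E : ι → Matrix Q (K × L) ℂ) (Ψ : L × L' → ℂ)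

private lemma Sf_eq (j : ι') (q : Q) (i : ι) (q' : Q) :
    Sf D E Ψ j q i q' = ∑ k, ∑ l', ∑ l, D j k (q, l') * E i q' (k, l) * Ψ (l, l') := by
  unfold Sf
  rw [Fintype.sum_prod_type]
  refine Finset.sum_congr rfl fun k _ => ?_
  conv_rhs => rw [Finset.sum_comm]
  refine Finset.sum_congr rfl fun l _ => ?_
  rw [Finset.mul_sum]
  exact Finset.sum_congr rfl fun l' _ => by ring

private lemma trace_eq (i : ι) (j : ι') :
    (∑ k, ∑ q, ∑ l', ∑ l, D j k (q, l') * E i q (k, l) * Ψ (l, l'))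
      = ∑ q, Sf D E Ψ j q i q := by
  rw [Finset.sum_comm]
  exact Finset.sum_congr rfl fun q _ => (Sf_eq D E Ψ j q i q).symm

private lemma hdf_eq (j : ι') (q : Q) (k : K) (l : L) :
    hdf D Ψ j q (k, l)
      = ∑ x : Q × L', D j k x * (if x.1 = q then Ψ (l, x.2) else 0) := by
  unfold hdf
  rw [Fintype.sum_prod_type]
  symm
  calc ∑ q₂, ∑ l', D j k (q₂, l') * (if q₂ = q then Ψ (l, l') else 0)
      = ∑ q₂, if q₂ = q then ∑ l', D j k (q₂, l') * Ψ (l, l') else 0 := by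
        refine Finset.sum_congr rfl fun q₂ _ => ?_
        split_ifs with h <;> simp
    _ = ∑ l', D j k (q, l') * Ψ (l, l') := by
        rw [Finset.sum_ite_eq' Finset.univ q]
        simp

private lemma ff_eq (i : ι) (k' : K) (q : Q) (l' : L') :
    ff E Ψ i k' (q, l')
      = ∑ u : K × L, E i q u * (if u.1 = k' then Ψ (u.2, l') else 0) := by
  unfold ff
  rw [Fintype.sum_prod_type]
  symm
  calc ∑ k₂, ∑ l, E i q (k₂, l) * (if k₂ = k' then Ψ (l, l') else 0)
      = ∑ k₂, if k₂ = k' then ∑ l, E i q (k₂, l) * Ψ (l, l') else 0 := by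
        refine Finset.sum_congr rfl fun k₂ _ => ?_
        split_ifs with h <;> simp
    _ = ∑ l, E i q (k', l) * Ψ (l, l') := by
        rw [Finset.sum_ite_eq' Finset.univ k']
        simp

end Main
section Main2

set_option linter.unusedSectionVars false

variable {K L L' Q : Type*} [Fintype K] [Fintype L] [Fintype L'] [Fintype Q]
    [DecidableEq K] [DecidableEq L] [DecidableEq L'] [DecidableEq Q]
    {ι ι' : Type*} [Fintype ι] [Fintype ι']

variable (D : ι' → Matrix K (Q × L') ℂ) (E : ι → Matrix Q (K × L) ℂ) (Ψ : L × L' → ℂ)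

private lemma Nf_eq (i : ι) (j : ι') (k k' : K) :
    (∑ q, ∑ l', ∑ l, D j k (q, l') * E i q (k', l) * Ψ (l, l'))
      = ∑ x : Q × L', D j k x * ff E Ψ i k' x := by
  rw [Fintype.sum_prod_type]
  refine Finset.sum_congr rfl fun q _ => Finset.sum_congr rfl fun l' _ => ?_
  unfold ff
  rw [Finset.mul_sum]
  exact Finset.sum_congr rfl fun l _ => by ring

private lemma hD'_of (hD : ∑ j, (D j)ᴴ * D j = 1) (x y : Q × L') :
    ∑ m : ι' × K, conj (D m.1 m.2 x) * D m.1 m.2 y = if x = y then 1 else 0 := by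
  have h := congrFun (congrFun hD x) y
  simp only [Matrix.sum_apply, Matrix.mul_apply, Matrix.conjTranspose_apply,
    Matrix.one_apply] at h
  rw [Fintype.sum_prod_type]
  exact h

private lemma hE'_of (hE : ∑ i, (E i)ᴴ * E i = 1) (u w : K × L) :
    ∑ m : ι × Q, conj (E m.1 m.2 u) * E m.1 m.2 w = if u = w then 1 else 0 := by
  have h := congrFun (congrFun hE u) w
  simp only [Matrix.sum_apply, Matrix.mul_apply, Matrix.conjTranspose_apply,
    Matrix.one_apply] at h
  rw [Fintype.sum_prod_type]
  exact h

private lemma hΨc_of (hΨ : ∑ p, Complex.normSq (Ψ p) = 1) :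
    ∑ l, ∑ l', conj (Ψ (l, l')) * Ψ (l, l') = 1 := by
  have key : ∑ p : L × L', conj (Ψ p) * Ψ p = 1 := by
    calc ∑ p : L × L', conj (Ψ p) * Ψ p
        = ∑ p : L × L', ((Complex.normSq (Ψ p) : ℝ) : ℂ) := by
          refine Finset.sum_congr rfl fun p _ => ?_
          rw [mul_comm, Complex.mul_conj]
      _ = 1 := by rw [← Complex.ofReal_sum, hΨ, Complex.ofReal_one]
  exact (Fintype.sum_prod_type (f := fun p : L × L' => conj (Ψ p) * Ψ p)).symm.trans key

end Main2
section Main3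

set_option linter.unusedSectionVars false

variable {K L L' Q : Type*} [Fintype K] [Fintype L] [Fintype L'] [Fintype Q]
    [DecidableEq K] [DecidableEq L] [DecidableEq L'] [DecidableEq Q]
    {ι ι' : Type*} [Fintype ι] [Fintype ι']

variable (D : ι' → Matrix K (Q × L') ℂ) (E : ι → Matrix Q (K × L) ℂ) (Ψ : L × L' → ℂ)

private lemma B2c (hE : ∑ i, (E i)ᴴ * E i = 1) (hD : ∑ j, (D j)ᴴ * D j = 1)
    (hΨ : ∑ p, Complex.normSq (Ψ p) = 1) :
    ∑ q : Q, ∑ j : ι', ∑ m : ι × Q, conj (Sf D E Ψ j q m.1 m.2) * Sf D E Ψ j q m.1 m.2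
      = (Fintype.card Q : ℂ) := by
  have hE' := hE'_of E hE
  have hD' := hD'_of D hD
  have hΨ2 := hΨc_of Ψ hΨ
  have step1 : ∀ (q : Q) (j : ι'),
      ∑ m : ι × Q, conj (Sf D E Ψ j q m.1 m.2) * Sf D E Ψ j q m.1 m.2
        = ∑ u : K × L, conj (hdf D Ψ j q u) * hdf D Ψ j q u := fun q j =>
    iso_collapse (fun (m : ι × Q) u => E m.1 m.2 u) hE' (hdf D Ψ j q) (hdf D Ψ j q)
  calc ∑ q, ∑ j, ∑ m : ι × Q, conj (Sf D E Ψ j q m.1 m.2) * Sf D E Ψ j q m.1 m.2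
      = ∑ q, ∑ j, ∑ u : K × L, conj (hdf D Ψ j q u) * hdf D Ψ j q u :=
        Finset.sum_congr rfl fun q _ => Finset.sum_congr rfl fun j _ => step1 q j
    _ = ∑ q, ∑ l, ∑ m : ι' × K, conj (hdf D Ψ m.1 q (m.2, l)) * hdf D Ψ m.1 q (m.2, l) := by
        refine Finset.sum_congr rfl fun q _ => ?_
        calc ∑ j, ∑ u : K × L, conj (hdf D Ψ j q u) * hdf D Ψ j q u
            = ∑ j, ∑ k, ∑ l, conj (hdf D Ψ j q (k, l)) * hdf D Ψ j q (k, l) :=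
              Finset.sum_congr rfl fun j _ => by rw [Fintype.sum_prod_type]
          _ = ∑ l, ∑ k, ∑ j, conj (hdf D Ψ j q (k, l)) * hdf D Ψ j q (k, l) := sum_comm3 _
          _ = ∑ l, ∑ j, ∑ k, conj (hdf D Ψ j q (k, l)) * hdf D Ψ j q (k, l) :=
              Finset.sum_congr rfl fun l _ => Finset.sum_comm
          _ = ∑ l, ∑ m : ι' × K, conj (hdf D Ψ m.1 q (m.2, l)) * hdf D Ψ m.1 q (m.2, l) :=
              Finset.sum_congr rfl fun l _ =>
                (Fintype.sum_prod_type (f := fun m : ι' × K =>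
                  conj (hdf D Ψ m.1 q (m.2, l)) * hdf D Ψ m.1 q (m.2, l))).symm
    _ = ∑ q, ∑ l, ∑ x : Q × L',
          conj (if x.1 = q then Ψ (l, x.2) else 0) * (if x.1 = q then Ψ (l, x.2) else 0) := by
        refine Finset.sum_congr rfl fun q _ => Finset.sum_congr rfl fun l _ => ?_
        have h := iso_collapse (fun (m : ι' × K) x => D m.1 m.2 x) hD'
          (fun x => if x.1 = q then Ψ (l, x.2) else 0)
          (fun x => if x.1 = q then Ψ (l, x.2) else 0)
        calc ∑ m : ι' × K, conj (hdf D Ψ m.1 q (m.2, l)) * hdf D Ψ m.1 q (m.2, l)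
            = ∑ m : ι' × K,
                conj (∑ x : Q × L', D m.1 m.2 x * (if x.1 = q then Ψ (l, x.2) else 0))
                * (∑ x : Q × L', D m.1 m.2 x * (if x.1 = q then Ψ (l, x.2) else 0)) := by
              refine Finset.sum_congr rfl fun m _ => ?_
              rw [hdf_eq]
          _ = _ := h
    _ = ∑ q : Q, ∑ l : L, ∑ l', conj (Ψ (l, l')) * Ψ (l, l') := by
        refine Finset.sum_congr rfl fun q _ => Finset.sum_congr rfl fun l _ => ?_
        rw [Fintype.sum_prod_type]
        calc ∑ q₂, ∑ l', conj (if q₂ = q then Ψ (l, l') else 0) * (if q₂ = q then Ψ (l, l') else 0)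
            = ∑ q₂, if q₂ = q then ∑ l', conj (Ψ (l, l')) * Ψ (l, l') else 0 := by
              refine Finset.sum_congr rfl fun q₂ _ => ?_
              split_ifs with h <;> simp
          _ = _ := by rw [Finset.sum_ite_eq' Finset.univ q]; simp
    _ = ∑ _q : Q, (1 : ℂ) := Finset.sum_congr rfl fun q _ => hΨ2
    _ = (Fintype.card Q : ℂ) := by simp

private lemma A3c (hE : ∑ i, (E i)ᴴ * E i = 1) (hD : ∑ j, (D j)ᴴ * D j = 1)
    (hΨ : ∑ p, Complex.normSq (Ψ p) = 1) :
    ∑ i : ι, ∑ k' : K, ∑ m : ι' × K,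
      conj (∑ q, ∑ l', ∑ l, D m.1 m.2 (q, l') * E i q (k', l) * Ψ (l, l'))
        * (∑ q, ∑ l', ∑ l, D m.1 m.2 (q, l') * E i q (k', l) * Ψ (l, l'))
      = (Fintype.card K : ℂ) := by
  have hE' := hE'_of E hE
  have hD' := hD'_of D hD
  have hΨ2 := hΨc_of Ψ hΨ
  calc ∑ i : ι, ∑ k' : K, ∑ m : ι' × K,
      conj (∑ q, ∑ l', ∑ l, D m.1 m.2 (q, l') * E i q (k', l) * Ψ (l, l'))
        * (∑ q, ∑ l', ∑ l, D m.1 m.2 (q, l') * E i q (k', l) * Ψ (l, l'))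
      = ∑ i, ∑ k', ∑ x : Q × L', conj (ff E Ψ i k' x) * ff E Ψ i k' x := by
        refine Finset.sum_congr rfl fun i _ => Finset.sum_congr rfl fun k' _ => ?_
        have h := iso_collapse (fun (m : ι' × K) x => D m.1 m.2 x) hD'
          (ff E Ψ i k') (ff E Ψ i k')
        calc ∑ m : ι' × K,
            conj (∑ q, ∑ l', ∑ l, D m.1 m.2 (q, l') * E i q (k', l) * Ψ (l, l'))
              * (∑ q, ∑ l', ∑ l, D m.1 m.2 (q, l') * E i q (k', l) * Ψ (l, l'))
            = ∑ m : ι' × K, conj (∑ x : Q × L', D m.1 m.2 x * ff E Ψ i k' x)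
                * (∑ x : Q × L', D m.1 m.2 x * ff E Ψ i k' x) := by
              refine Finset.sum_congr rfl fun m _ => ?_
              rw [Nf_eq]
          _ = _ := h
    _ = ∑ k', ∑ l', ∑ m : ι × Q, conj (ff E Ψ m.1 k' (m.2, l')) * ff E Ψ m.1 k' (m.2, l') := by
        calc ∑ i, ∑ k', ∑ x : Q × L', conj (ff E Ψ i k' x) * ff E Ψ i k' x
            = ∑ k', ∑ i, ∑ x : Q × L', conj (ff E Ψ i k' x) * ff E Ψ i k' x := Finset.sum_comm
          _ = ∑ k', ∑ i, ∑ q, ∑ l', conj (ff E Ψ i k' (q, l')) * ff E Ψ i k' (q, l') :=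
              Finset.sum_congr rfl fun k' _ => Finset.sum_congr rfl fun i _ => by
                rw [Fintype.sum_prod_type]
          _ = ∑ k', ∑ l', ∑ q, ∑ i, conj (ff E Ψ i k' (q, l')) * ff E Ψ i k' (q, l') :=
              Finset.sum_congr rfl fun k' _ => sum_comm3 _
          _ = ∑ k', ∑ l', ∑ i, ∑ q, conj (ff E Ψ i k' (q, l')) * ff E Ψ i k' (q, l') :=
              Finset.sum_congr rfl fun k' _ => Finset.sum_congr rfl fun l' _ =>
                Finset.sum_comm
          _ = ∑ k', ∑ l', ∑ m : ι × Q, conj (ff E Ψ m.1 k' (m.2, l')) * ff E Ψ m.1 k' (m.2, l') :=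
              Finset.sum_congr rfl fun k' _ => Finset.sum_congr rfl fun l' _ =>
                (Fintype.sum_prod_type (f := fun m : ι × Q =>
                  conj (ff E Ψ m.1 k' (m.2, l')) * ff E Ψ m.1 k' (m.2, l'))).symm
    _ = ∑ k', ∑ l', ∑ u : K × L,
          conj (if u.1 = k' then Ψ (u.2, l') else 0) * (if u.1 = k' then Ψ (u.2, l') else 0) := by
        refine Finset.sum_congr rfl fun k' _ => Finset.sum_congr rfl fun l' _ => ?_
        have h := iso_collapse (fun (m : ι × Q) u => E m.1 m.2 u) hE'
          (fun u => if u.1 = k' then Ψ (u.2, l') else 0)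
          (fun u => if u.1 = k' then Ψ (u.2, l') else 0)
        calc ∑ m : ι × Q, conj (ff E Ψ m.1 k' (m.2, l')) * ff E Ψ m.1 k' (m.2, l')
            = ∑ m : ι × Q,
                conj (∑ u : K × L, E m.1 m.2 u * (if u.1 = k' then Ψ (u.2, l') else 0))
                * (∑ u : K × L, E m.1 m.2 u * (if u.1 = k' then Ψ (u.2, l') else 0)) := by
              refine Finset.sum_congr rfl fun m _ => ?_
              rw [ff_eq]
          _ = _ := h
    _ = ∑ k' : K, ∑ l', ∑ l, conj (Ψ (l, l')) * Ψ (l, l') := by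
        refine Finset.sum_congr rfl fun k' _ => Finset.sum_congr rfl fun l' _ => ?_
        rw [Fintype.sum_prod_type]
        calc ∑ k₂, ∑ l, conj (if k₂ = k' then Ψ (l, l') else 0) * (if k₂ = k' then Ψ (l, l') else 0)
            = ∑ k₂, if k₂ = k' then ∑ l, conj (Ψ (l, l')) * Ψ (l, l') else 0 := by
              refine Finset.sum_congr rfl fun k₂ _ => ?_
              split_ifs with h <;> simp
          _ = _ := by rw [Finset.sum_ite_eq' Finset.univ k']; simp
    _ = ∑ _k' : K, (1 : ℂ) := by
        refine Finset.sum_congr rfl fun k' _ => ?_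
        rw [Finset.sum_comm]
        exact hΨ2
    _ = (Fintype.card K : ℂ) := by simp

end Main3
section Main4

set_option linter.unusedSectionVars false

variable {K L L' Q : Type*} [Fintype K] [Fintype L] [Fintype L'] [Fintype Q]
    [DecidableEq K] [DecidableEq L] [DecidableEq L'] [DecidableEq Q]
    {ι ι' : Type*} [Fintype ι] [Fintype ι']

private lemma pull_const {α β : Type*} [Fintype α] [Fintype β] (f : α → β → ℝ) (c : ℝ) :
    ∑ i, ∑ j, c * f i j = c * ∑ i, ∑ j, f i j := by
  rw [Finset.mul_sum]
  exact Finset.sum_congr rfl fun i _ => by rw [Finset.mul_sum]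

private lemma main_bound
    (E : ι → Matrix Q (K × L) ℂ) (hE : ∑ i, (E i)ᴴ * E i = 1)
    (D : ι' → Matrix K (Q × L') ℂ) (hD : ∑ j, (D j)ᴴ * D j = 1)
    (Ψ : L × L' → ℂ) (hΨ : ∑ p, Complex.normSq (Ψ p) = 1) :
    ∑ i : ι, ∑ j : ι',
      Complex.normSq (∑ k, ∑ q, ∑ l', ∑ l, D j k (q, l') * E i q (k, l) * Ψ (l, l'))
      ≤ (Fintype.card K : ℝ) * (Fintype.card Q : ℝ) := by
  have B2r : ∑ q : Q, ∑ j : ι', ∑ m : ι × Q, Complex.normSq (Sf D E Ψ j q m.1 m.2)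
      = (Fintype.card Q : ℝ) := by
    have h2 : ∑ q : Q, ∑ j : ι', ∑ m : ι × Q,
        ((Complex.normSq (Sf D E Ψ j q m.1 m.2) : ℝ) : ℂ) = ((Fintype.card Q : ℝ) : ℂ) := by
      calc ∑ q : Q, ∑ j : ι', ∑ m : ι × Q, ((Complex.normSq (Sf D E Ψ j q m.1 m.2) : ℝ) : ℂ)
          = ∑ q : Q, ∑ j : ι', ∑ m : ι × Q,
              conj (Sf D E Ψ j q m.1 m.2) * Sf D E Ψ j q m.1 m.2 := by
            refine Finset.sum_congr rfl fun q _ => Finset.sum_congr rfl fun j _ =>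
              Finset.sum_congr rfl fun m _ => ?_
            rw [mul_comm, Complex.mul_conj]
        _ = (Fintype.card Q : ℂ) := B2c D E Ψ hE hD hΨ
        _ = ((Fintype.card Q : ℝ) : ℂ) := by norm_num
    exact_mod_cast h2
  have A3r : ∑ i : ι, ∑ k : K, ∑ m : ι' × K,
      Complex.normSq (∑ q, ∑ l', ∑ l, D m.1 m.2 (q, l') * E i q (k, l) * Ψ (l, l'))
      = (Fintype.card K : ℝ) := by
    have h2 : ∑ i : ι, ∑ k : K, ∑ m : ι' × K,
        ((Complex.normSq (∑ q, ∑ l', ∑ l, D m.1 m.2 (q, l') * E i q (k, l) * Ψ (l, l')) : ℝ) : ℂ)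
        = ((Fintype.card K : ℝ) : ℂ) := by
      calc ∑ i : ι, ∑ k : K, ∑ m : ι' × K,
          ((Complex.normSq (∑ q, ∑ l', ∑ l, D m.1 m.2 (q, l') * E i q (k, l) * Ψ (l, l')) : ℝ) : ℂ)
          = ∑ i : ι, ∑ k : K, ∑ m : ι' × K,
              conj (∑ q, ∑ l', ∑ l, D m.1 m.2 (q, l') * E i q (k, l) * Ψ (l, l'))
              * (∑ q, ∑ l', ∑ l, D m.1 m.2 (q, l') * E i q (k, l) * Ψ (l, l')) := by
            refine Finset.sum_congr rfl fun i _ => Finset.sum_congr rfl fun k _ =>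
              Finset.sum_congr rfl fun m _ => ?_
            rw [mul_comm, Complex.mul_conj]
        _ = (Fintype.card K : ℂ) := A3c D E Ψ hE hD hΨ
        _ = ((Fintype.card K : ℝ) : ℂ) := by norm_num
    exact_mod_cast h2
  have chainA : ∑ i : ι, ∑ j : ι',
      Complex.normSq (∑ k, ∑ q, ∑ l', ∑ l, D j k (q, l') * E i q (k, l) * Ψ (l, l'))
      ≤ (Fintype.card K : ℝ) * (Fintype.card K : ℝ) := by
    have step : ∀ (i : ι) (j : ι'),
        Complex.normSq (∑ k, ∑ q, ∑ l', ∑ l, D j k (q, l') * E i q (k, l) * Ψ (l, l'))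
        ≤ (Fintype.card K : ℝ) * ∑ k, ∑ k₂,
            Complex.normSq (∑ q, ∑ l', ∑ l, D j k₂ (q, l') * E i q (k, l) * Ψ (l, l')) := by
      intro i j
      calc Complex.normSq (∑ k, ∑ q, ∑ l', ∑ l, D j k (q, l') * E i q (k, l) * Ψ (l, l'))
          ≤ (Fintype.card K : ℝ) * ∑ k,
              Complex.normSq (∑ q, ∑ l', ∑ l, D j k (q, l') * E i q (k, l) * Ψ (l, l')) := by
            simpa using normSq_sum_le
              (fun k => ∑ q, ∑ l', ∑ l, D j k (q, l') * E i q (k, l) * Ψ (l, l'))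
        _ ≤ (Fintype.card K : ℝ) * ∑ k, ∑ k₂,
              Complex.normSq (∑ q, ∑ l', ∑ l, D j k₂ (q, l') * E i q (k, l) * Ψ (l, l')) := by
            refine mul_le_mul_of_nonneg_left (Finset.sum_le_sum fun k _ => ?_)
              (Nat.cast_nonneg _)
            exact Finset.single_le_sum
              (f := fun k₂ => Complex.normSq
                (∑ q, ∑ l', ∑ l, D j k₂ (q, l') * E i q (k, l) * Ψ (l, l')))
              (fun k₂ _ => Complex.normSq_nonneg _) (Finset.mem_univ k)
    calc ∑ i : ι, ∑ j : ι',
        Complex.normSq (∑ k, ∑ q, ∑ l', ∑ l, D j k (q, l') * E i q (k, l) * Ψ (l, l'))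
        ≤ ∑ i : ι, ∑ j : ι', (Fintype.card K : ℝ) * ∑ k, ∑ k₂,
            Complex.normSq (∑ q, ∑ l', ∑ l, D j k₂ (q, l') * E i q (k, l) * Ψ (l, l')) :=
          Finset.sum_le_sum fun i _ => Finset.sum_le_sum fun j _ => step i j
      _ = (Fintype.card K : ℝ) * ∑ i : ι, ∑ j : ι', ∑ k, ∑ k₂,
            Complex.normSq (∑ q, ∑ l', ∑ l, D j k₂ (q, l') * E i q (k, l) * Ψ (l, l')) :=
          pull_const _ _
      _ = (Fintype.card K : ℝ) * ∑ i : ι, ∑ k : K, ∑ m : ι' × K,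
            Complex.normSq (∑ q, ∑ l', ∑ l, D m.1 m.2 (q, l') * E i q (k, l) * Ψ (l, l')) := by
          congr 1
          refine Finset.sum_congr rfl fun i _ => ?_
          calc ∑ j : ι', ∑ k, ∑ k₂,
              Complex.normSq (∑ q, ∑ l', ∑ l, D j k₂ (q, l') * E i q (k, l) * Ψ (l, l'))
              = ∑ k, ∑ j : ι', ∑ k₂,
                Complex.normSq (∑ q, ∑ l', ∑ l, D j k₂ (q, l') * E i q (k, l) * Ψ (l, l')) :=
              Finset.sum_comm
            _ = ∑ k, ∑ m : ι' × K,
                Complex.normSq (∑ q, ∑ l', ∑ l, D m.1 m.2 (q, l') * E i q (k, l) * Ψ (l, l')) :=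
              Finset.sum_congr rfl fun k _ =>
                (Fintype.sum_prod_type (f := fun m : ι' × K =>
                  Complex.normSq
                    (∑ q, ∑ l', ∑ l, D m.1 m.2 (q, l') * E i q (k, l) * Ψ (l, l')))).symm
      _ = (Fintype.card K : ℝ) * (Fintype.card K : ℝ) := by rw [A3r]
  have chainB : ∑ i : ι, ∑ j : ι',
      Complex.normSq (∑ k, ∑ q, ∑ l', ∑ l, D j k (q, l') * E i q (k, l) * Ψ (l, l'))
      ≤ (Fintype.card Q : ℝ) * (Fintype.card Q : ℝ) := by
    have step : ∀ (i : ι) (j : ι'),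
        Complex.normSq (∑ k, ∑ q, ∑ l', ∑ l, D j k (q, l') * E i q (k, l) * Ψ (l, l'))
        ≤ (Fintype.card Q : ℝ) * ∑ q, ∑ q', Complex.normSq (Sf D E Ψ j q i q') := by
      intro i j
      calc Complex.normSq (∑ k, ∑ q, ∑ l', ∑ l, D j k (q, l') * E i q (k, l) * Ψ (l, l'))
          = Complex.normSq (∑ q, Sf D E Ψ j q i q) := by rw [trace_eq]
        _ ≤ (Fintype.card Q : ℝ) * ∑ q, Complex.normSq (Sf D E Ψ j q i q) := by
            simpa using normSq_sum_le (fun q => Sf D E Ψ j q i q)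
        _ ≤ (Fintype.card Q : ℝ) * ∑ q, ∑ q', Complex.normSq (Sf D E Ψ j q i q') := by
            refine mul_le_mul_of_nonneg_left (Finset.sum_le_sum fun q _ => ?_)
              (Nat.cast_nonneg _)
            exact Finset.single_le_sum
              (f := fun q' => Complex.normSq (Sf D E Ψ j q i q'))
              (fun q' _ => Complex.normSq_nonneg _) (Finset.mem_univ q)
    calc ∑ i : ι, ∑ j : ι',
        Complex.normSq (∑ k, ∑ q, ∑ l', ∑ l, D j k (q, l') * E i q (k, l) * Ψ (l, l'))
        ≤ ∑ i : ι, ∑ j : ι', (Fintype.card Q : ℝ) * ∑ q, ∑ q',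
            Complex.normSq (Sf D E Ψ j q i q') :=
          Finset.sum_le_sum fun i _ => Finset.sum_le_sum fun j _ => step i j
      _ = (Fintype.card Q : ℝ) * ∑ i : ι, ∑ j : ι', ∑ q, ∑ q',
            Complex.normSq (Sf D E Ψ j q i q') := pull_const _ _
      _ = (Fintype.card Q : ℝ) * ∑ q : Q, ∑ j : ι', ∑ m : ι × Q,
            Complex.normSq (Sf D E Ψ j q m.1 m.2) := by
          congr 1
          calc ∑ i : ι, ∑ j : ι', ∑ q, ∑ q', Complex.normSq (Sf D E Ψ j q i q')
              = ∑ q : Q, ∑ j : ι', ∑ i : ι, ∑ q', Complex.normSq (Sf D E Ψ j q i q') :=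
                sum_comm3 _
            _ = ∑ q : Q, ∑ j : ι', ∑ m : ι × Q, Complex.normSq (Sf D E Ψ j q m.1 m.2) :=
                Finset.sum_congr rfl fun q _ => Finset.sum_congr rfl fun j _ =>
                  (Fintype.sum_prod_type (f := fun m : ι × Q =>
                    Complex.normSq (Sf D E Ψ j q m.1 m.2))).symm
      _ = (Fintype.card Q : ℝ) * (Fintype.card Q : ℝ) := by rw [B2r]
  rcases le_total (Fintype.card K : ℝ) (Fintype.card Q : ℝ) with h | h
  · exact chainA.trans (mul_le_mul_of_nonneg_left h (Nat.cast_nonneg _))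
  · exact chainB.trans (mul_le_mul_of_nonneg_right h (Nat.cast_nonneg _))

end Main4
private lemma term_eq {n : Type*} [Fintype n] (A : Matrix n n ℂ) (Φ : n → ℂ) :
    star Φ ⬝ᵥ ((A * Matrix.vecMulVec Φ (star Φ) * Aᴴ) *ᵥ Φ)
      = (Complex.normSq (star Φ ⬝ᵥ (A *ᵥ Φ)) : ℂ) := by
  have hP : Matrix.vecMulVec Φ (star Φ) *ᵥ (Aᴴ *ᵥ Φ) = (star Φ ⬝ᵥ (Aᴴ *ᵥ Φ)) • Φ := by
    ext x
    simp only [Matrix.mulVec, Matrix.vecMulVec_apply, dotProduct, Pi.smul_apply,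
      smul_eq_mul, Finset.sum_mul, Pi.star_apply]
    exact Finset.sum_congr rfl fun y _ => by ring
  have hconj : star Φ ⬝ᵥ (Aᴴ *ᵥ Φ) = conj (star Φ ⬝ᵥ (A *ᵥ Φ)) := by
    calc star Φ ⬝ᵥ (Aᴴ *ᵥ Φ)
        = ∑ y, ∑ x, conj (Φ y) * (conj (A x y) * Φ x) := by
          simp only [dotProduct, Matrix.mulVec, Matrix.conjTranspose_apply,
            Pi.star_apply, Finset.mul_sum, Complex.star_def]
      _ = ∑ x, ∑ y, conj (Φ y) * (conj (A x y) * Φ x) := Finset.sum_comm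
      _ = conj (∑ x, conj (Φ x) * ∑ y, A x y * Φ y) := by
          rw [map_sum]
          refine Finset.sum_congr rfl fun x _ => ?_
          rw [_root_.map_mul, map_sum, Finset.mul_sum]
          refine Finset.sum_congr rfl fun y _ => ?_
          rw [_root_.map_mul]
          simp only [Complex.conj_conj]
          ring
      _ = conj (star Φ ⬝ᵥ (A *ᵥ Φ)) := by
          simp only [dotProduct, Matrix.mulVec, Pi.star_apply, Complex.star_def]
  calc star Φ ⬝ᵥ ((A * Matrix.vecMulVec Φ (star Φ) * Aᴴ) *ᵥ Φ)
      = star Φ ⬝ᵥ (A *ᵥ (Matrix.vecMulVec Φ (star Φ) *ᵥ (Aᴴ *ᵥ Φ))) := by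
        rw [Matrix.mulVec_mulVec, Matrix.mulVec_mulVec]
    _ = star Φ ⬝ᵥ (A *ᵥ ((star Φ ⬝ᵥ (Aᴴ *ᵥ Φ)) • Φ)) := by rw [hP]
    _ = (star Φ ⬝ᵥ (Aᴴ *ᵥ Φ)) * (star Φ ⬝ᵥ (A *ᵥ Φ)) := by
        rw [Matrix.mulVec_smul, dotProduct_smul, smul_eq_mul]
    _ = conj (star Φ ⬝ᵥ (A *ᵥ Φ)) * (star Φ ⬝ᵥ (A *ᵥ Φ)) := by rw [hconj]
    _ = (Complex.normSq (star Φ ⬝ᵥ (A *ᵥ Φ)) : ℂ) := by rw [mul_comm, Complex.mul_conj]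

private lemma phi_dot {K : Type*} [Fintype K] [DecidableEq K] (M : Matrix K K ℂ) :
    (star fun p : K × K => if p.1 = p.2 then ((Real.sqrt (Fintype.card K) : ℂ))⁻¹ else 0) ⬝ᵥ
      (((1 : Matrix K K ℂ) ⊗ₖ M) *ᵥ
        fun p : K × K => if p.1 = p.2 then ((Real.sqrt (Fintype.card K) : ℂ))⁻¹ else 0)
    = ((Real.sqrt (Fintype.card K) : ℂ))⁻¹ * ((Real.sqrt (Fintype.card K) : ℂ))⁻¹
        * ∑ k, M k k := by
  set s : ℂ := ((Real.sqrt (Fintype.card K) : ℂ))⁻¹ with hs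
  have hstar : star s = s := by
    rw [hs]
    simp [Complex.star_def, map_inv₀, Complex.conj_ofReal]
  calc (star fun p : K × K => if p.1 = p.2 then s else 0) ⬝ᵥ
      (((1 : Matrix K K ℂ) ⊗ₖ M) *ᵥ fun p : K × K => if p.1 = p.2 then s else 0)
      = ∑ a, ∑ b, star (if a = b then s else 0) *
          ∑ c, ∑ e, ((1 : Matrix K K ℂ) a c * M b e) * (if c = e then s else 0) := by
        simp only [dotProduct, Matrix.mulVec, Pi.star_apply, Matrix.kroneckerMap_apply]
        rw [Fintype.sum_prod_type]
        exact Finset.sum_congr rfl fun a _ => Finset.sum_congr rfl fun b _ => by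
          rw [Fintype.sum_prod_type]
    _ = ∑ a, ∑ b, star (if a = b then s else 0) * (M b a * s) := by
        refine Finset.sum_congr rfl fun a _ => Finset.sum_congr rfl fun b _ => ?_
        congr 1
        calc ∑ c, ∑ e, ((1 : Matrix K K ℂ) a c * M b e) * (if c = e then s else 0)
            = ∑ c, if a = c then ∑ e, M b e * (if c = e then s else 0) else 0 := by
              refine Finset.sum_congr rfl fun c _ => ?_
              simp only [Matrix.one_apply]
              split_ifs with h <;> simp
          _ = ∑ e, M b e * (if a = e then s else 0) := by
              rw [Finset.sum_ite_eq Finset.univ a]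
              simp
          _ = M b a * s := by
              calc ∑ e, M b e * (if a = e then s else 0)
                  = ∑ e, if a = e then M b e * s else 0 := by
                    refine Finset.sum_congr rfl fun e _ => ?_
                    split_ifs with h <;> simp
                _ = M b a * s := by rw [Finset.sum_ite_eq Finset.univ a]; simp
    _ = ∑ a, s * (M a a * s) := by
        refine Finset.sum_congr rfl fun a _ => ?_
        calc ∑ b, star (if a = b then s else 0) * (M b a * s)
            = ∑ b, if a = b then s * (M b a * s) else 0 := by
              refine Finset.sum_congr rfl fun b _ => ?_
              split_ifs with h <;> simp [hstar]
          _ = s * (M a a * s) := by rw [Finset.sum_ite_eq Finset.univ a]; simp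
    _ = s * s * ∑ k, M k k := by
        rw [Finset.mul_sum]
        exact Finset.sum_congr rfl fun a _ => by ring
/-- Entanglement fidelity bound for assisted channel simulation: simulating an identity
channel on `K` via a channel `ℰ : KL → Q` (Kraus family `E`), transmission of `Q`, and a
channel `𝒟 : QL' → K` (Kraus family `D`), assisted by a pure state `Ψ` on `L ⊗ L'`, the
entanglement fidelity with the maximally entangled state on `K' ⊗ K` is at most
`dim Q / dim K`. -/
theorem assisted_simulation_entanglement_fidelity_bound
    {K L L' Q : Type*} [Fintype K] [Fintype L] [Fintype L'] [Fintype Q]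
    [DecidableEq K] [DecidableEq L] [DecidableEq L'] [DecidableEq Q] [Nonempty K]
    {ι ι' : Type*} [Fintype ι] [Fintype ι']
    (E : ι → Matrix Q (K × L) ℂ) (hE : ∑ i, (E i)ᴴ * E i = 1)
    (D : ι' → Matrix K (Q × L') ℂ) (hD : ∑ j, (D j)ᴴ * D j = 1)
    (Ψ : L × L' → ℂ) (hΨ : ∑ p, Complex.normSq (Ψ p) = 1) :
    -- Kraus operators of the overall simulated channel `𝒩 = 𝒟 ∘ (ℰ ⊗ id) ∘ (· ⊗ Ψ)`
    let N : ι → ι' → Matrix K K ℂ := fun i j => Matrix.of fun k k' =>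
      ∑ q, ∑ l', ∑ l, D j k (q, l') * E i q (k', l) * Ψ (l, l')
    -- the maximally entangled state on `K' ⊗ K` (with `K' = K`)
    let Φ : K × K → ℂ := fun p => if p.1 = p.2 then ((Real.sqrt (Fintype.card K) : ℂ))⁻¹ else 0
    (star Φ ⬝ᵥ ((∑ i, ∑ j, ((1 : Matrix K K ℂ) ⊗ₖ N i j) * Matrix.vecMulVec Φ (star Φ)
        * ((1 : Matrix K K ℂ) ⊗ₖ N i j)ᴴ) *ᵥ Φ)).re
      ≤ (Fintype.card Q : ℝ) / (Fintype.card K : ℝ) := by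
  intro N Φ
  have hN : ∀ (i : ι) (j : ι') (k k' : K), N i j k k'
      = ∑ q, ∑ l', ∑ l, D j k (q, l') * E i q (k', l) * Ψ (l, l') := fun _ _ _ _ => rfl
  have hΦ : Φ = fun p : K × K =>
      if p.1 = p.2 then ((Real.sqrt (Fintype.card K) : ℂ))⁻¹ else 0 := rfl
  have hdpos : (0 : ℝ) < (Fintype.card K : ℝ) := by exact_mod_cast Fintype.card_pos
  have expand : star Φ ⬝ᵥ ((∑ i, ∑ j, ((1 : Matrix K K ℂ) ⊗ₖ N i j)
        * Matrix.vecMulVec Φ (star Φ) * ((1 : Matrix K K ℂ) ⊗ₖ N i j)ᴴ) *ᵥ Φ)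
      = ∑ i, ∑ j, star Φ ⬝ᵥ ((((1 : Matrix K K ℂ) ⊗ₖ N i j)
        * Matrix.vecMulVec Φ (star Φ) * ((1 : Matrix K K ℂ) ⊗ₖ N i j)ᴴ) *ᵥ Φ) := by
    show dotHom (star Φ) Φ (∑ i, ∑ j, _) = _
    rw [map_sum]
    exact Finset.sum_congr rfl fun i _ => map_sum _ _ _
  have hterm : ∀ (i : ι) (j : ι'),
      (star Φ ⬝ᵥ ((((1 : Matrix K K ℂ) ⊗ₖ N i j) * Matrix.vecMulVec Φ (star Φ)
        * ((1 : Matrix K K ℂ) ⊗ₖ N i j)ᴴ) *ᵥ Φ)).re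
      = ((Fintype.card K : ℝ))⁻¹ * ((Fintype.card K : ℝ))⁻¹
          * Complex.normSq (∑ k, ∑ q, ∑ l', ∑ l, D j k (q, l') * E i q (k, l) * Ψ (l, l')) := by
    intro i j
    rw [term_eq, Complex.ofReal_re]
    have hc0 : star Φ ⬝ᵥ (((1 : Matrix K K ℂ) ⊗ₖ N i j) *ᵥ Φ)
        = ((Real.sqrt (Fintype.card K) : ℂ))⁻¹ * ((Real.sqrt (Fintype.card K) : ℂ))⁻¹
            * ∑ k, N i j k k := by
      rw [hΦ]
      exact phi_dot (N i j)
    rw [hc0, Complex.normSq_mul, Complex.normSq_mul, Complex.normSq_inv,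
      Complex.normSq_ofReal, Real.mul_self_sqrt (Nat.cast_nonneg _)]
    congr 1
  rw [expand, Complex.re_sum]
  calc ∑ i, (∑ j, star Φ ⬝ᵥ ((((1 : Matrix K K ℂ) ⊗ₖ N i j)
        * Matrix.vecMulVec Φ (star Φ) * ((1 : Matrix K K ℂ) ⊗ₖ N i j)ᴴ) *ᵥ Φ)).re
      = ∑ i, ∑ j, ((Fintype.card K : ℝ))⁻¹ * ((Fintype.card K : ℝ))⁻¹
          * Complex.normSq (∑ k, ∑ q, ∑ l', ∑ l, D j k (q, l') * E i q (k, l) * Ψ (l, l')) := by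
        refine Finset.sum_congr rfl fun i _ => ?_
        rw [Complex.re_sum]
        exact Finset.sum_congr rfl fun j _ => hterm i j
    _ = ((Fintype.card K : ℝ))⁻¹ * ((Fintype.card K : ℝ))⁻¹
          * ∑ i, ∑ j, Complex.normSq
              (∑ k, ∑ q, ∑ l', ∑ l, D j k (q, l') * E i q (k, l) * Ψ (l, l')) := by
        rw [← pull_const (fun i j => Complex.normSq
          (∑ k, ∑ q, ∑ l', ∑ l, D j k (q, l') * E i q (k, l) * Ψ (l, l')))]
    _ ≤ ((Fintype.card K : ℝ))⁻¹ * ((Fintype.card K : ℝ))⁻¹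
          * ((Fintype.card K : ℝ) * (Fintype.card Q : ℝ)) := by
        refine mul_le_mul_of_nonneg_left (main_bound E hE D hD Ψ hΨ) ?_
        positivity
    _ = (Fintype.card Q : ℝ) / (Fintype.card K : ℝ) := by
        field_simp
end

section
/- (Coherification lemma) Let |ψ⟩ be a pure state on D⊗E, let U_1,...,U_κ be unitaries on D, and set |ψ_k⟩ = (U_k ⊗ 1)|ψ⟩. Let |ψ'_k⟩ be arbitrary pure states on D⊗E and let {Λ_k} be a POVM on D (positive operators with Σ_k Λ_k = 1). Then there exist complex phases α_k (|α_k| = 1) such that the operator ℒ = Σ_k (α_k U_k† √Λ_k) ⊗ |k⟩, mapping D to D⊗K, satisfies (1/κ) Σ_{k=1}^κ Re⟨k|⟨ψ| ℒ |ψ'_k⟩ ≥ 1 - 2(P + √(1-F)), where P = 1 - (1/κ) Σ_k Tr(ψ_k Λ_k), F = (1/κ) Σ_k |⟨ψ_k|ψ'_k⟩|², and ψ_k denotes the reduced density matrix of |ψ_k⟩ on D. -/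
open Matrix Kronecker BigOperators ComplexOrder

/-- The positive semidefinite square root of a positive semidefinite matrix
(the definition removed from Mathlib, restored verbatim). -/
noncomputable def Matrix.PosSemidef.sqrt {n 𝕜 : Type*} [Fintype n] [DecidableEq n] [RCLike 𝕜]
    {A : Matrix n n 𝕜} (hA : A.PosSemidef) : Matrix n n 𝕜 :=
  hA.1.eigenvectorUnitary.1 * diagonal ((↑) ∘ (√·) ∘ hA.1.eigenvalues) *
  (star hA.1.eigenvectorUnitary : Matrix n n 𝕜)

lemma Matrix.IsHermitian.spectral_theorem_old {n 𝕜 : Type*} [Fintype n] [DecidableEq n] [RCLike 𝕜]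
    {A : Matrix n n 𝕜} (hA : A.IsHermitian) :
    (hA.eigenvectorUnitary : Matrix n n 𝕜) * diagonal (RCLike.ofReal ∘ hA.eigenvalues) *
      (star hA.eigenvectorUnitary : Matrix n n 𝕜) = A := by
  have h := hA.spectral_theorem
  rw [Unitary.conjStarAlgAut_apply] at h
  exact h.symm

lemma Matrix.PosSemidef.posSemidef_sqrt {n 𝕜 : Type*} [Fintype n] [DecidableEq n] [RCLike 𝕜]
    {A : Matrix n n 𝕜} (hA : A.PosSemidef) : hA.sqrt.PosSemidef := by
  unfold Matrix.PosSemidef.sqrt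
  refine PosSemidef.mul_mul_conjTranspose_same (PosSemidef.diagonal ?_) _
  intro i
  simp only [Function.comp_apply, Pi.zero_apply]
  exact_mod_cast Real.sqrt_nonneg _

lemma Matrix.PosSemidef.sqrt_mul_self {n 𝕜 : Type*} [Fintype n] [DecidableEq n] [RCLike 𝕜]
    {A : Matrix n n 𝕜} (hA : A.PosSemidef) : hA.sqrt * hA.sqrt = A := by
  let C : Matrix n n 𝕜 := hA.1.eigenvectorUnitary
  let E := diagonal ((↑) ∘ (√·) ∘ hA.1.eigenvalues : n → 𝕜)
  suffices C * (E * (star C * C) * E) * star C = A by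
    rw [Matrix.PosSemidef.sqrt]
    simpa only [← mul_assoc] using this
  have : E * E = diagonal (RCLike.ofReal ∘ hA.1.eigenvalues) := by
    rw [diagonal_mul_diagonal]
    congr! with v
    simp [← pow_two, ← RCLike.ofReal_pow, Real.sq_sqrt (hA.eigenvalues_nonneg v)]
  have hu : star C * C = 1 := by simp [C]
  rw [hu, Matrix.mul_one, this]
  exact hA.1.spectral_theorem_old

lemma Matrix.posSemidef_iff_eq_transpose_mul_self {n : Type*} [Fintype n]
    {A : Matrix n n ℂ} : A.PosSemidef ↔ ∃ B : Matrix n n ℂ, A = Bᴴ * B := by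
  classical
  constructor
  · intro hA
    refine ⟨hA.sqrt, ?_⟩
    rw [hA.posSemidef_sqrt.1.eq, hA.sqrt_mul_self]
  · rintro ⟨B, rfl⟩
    exact posSemidef_conjTranspose_mul_self B

lemma EuclideanSpace.inner_piLp_equiv_symm {n : Type*} [Fintype n] (x y : n → ℂ) :
    inner ℂ ((WithLp.equiv 2 (n → ℂ)).symm x : EuclideanSpace ℂ n)
      ((WithLp.equiv 2 (n → ℂ)).symm y) = star x ⬝ᵥ y := by
  rw [dotProduct_comm]; rfl

section Aux

variable {D E : Type*} [Fintype D] [Fintype E] [DecidableEq D] [DecidableEq E]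

omit [Fintype D] [Fintype E] [DecidableEq D] [DecidableEq E] in
lemma kron_conjT (A : Matrix D D ℂ) (B : Matrix E E ℂ) :
    (A ⊗ₖ B)ᴴ = Aᴴ ⊗ₖ Bᴴ := by
  ext ⟨a,b⟩ ⟨c,d⟩
  simp [conjTranspose_apply, kroneckerMap_apply]

omit [DecidableEq D] in
lemma kron_one_psd {M : Matrix D D ℂ} (hM : M.PosSemidef) :
    (M ⊗ₖ (1 : Matrix E E ℂ)).PosSemidef := by
  obtain ⟨B, rfl⟩ := posSemidef_iff_eq_transpose_mul_self.1 hM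
  have : (Bᴴ * B) ⊗ₖ (1 : Matrix E E ℂ) = (B ⊗ₖ (1 : Matrix E E ℂ))ᴴ * (B ⊗ₖ 1) := by
    rw [kron_conjT, conjTranspose_one, ← mul_kronecker_mul, one_mul]
  rw [this]
  exact posSemidef_conjTranspose_mul_self _

lemma re_dot_self {n : Type*} [Fintype n] (v : n → ℂ) :
    RCLike.re ((star v : n → ℂ) ⬝ᵥ v) = ∑ i, Complex.normSq (v i) := by
  simp only [dotProduct, Pi.star_apply, RCLike.star_def, map_sum]
  congr 1; funext i
  rw [← Complex.normSq_eq_conj_mul_self]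
  simp

lemma euclidean_norm_one (v : EuclideanSpace ℂ D) (hv : ‖v‖ = 1) :
    ∑ i, Complex.normSq ((v : D → ℂ) i) = 1 := by
  have h := EuclideanSpace.norm_eq v
  rw [hv] at h
  have h3 : ∑ i, ‖v i‖^2 = 1 := Real.sqrt_eq_one.mp h.symm
  calc ∑ i, Complex.normSq ((v : D → ℂ) i) = ∑ i, ‖v i‖^2 := by
        simp [Complex.normSq_eq_norm_sq]
    _ = 1 := h3

omit [Fintype E] [DecidableEq E] in
lemma sqrt_sub_psd {M : Matrix D D ℂ} (hM : M.PosSemidef) (h1 : (1 - M).PosSemidef) :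
    (hM.sqrt - M).PosSemidef := by
  have key : ∀ i, hM.1.eigenvalues i ≤ 1 := by
    intro i
    have h := h1.re_dotProduct_nonneg (hM.1.eigenvectorBasis i)
    rw [sub_mulVec, dotProduct_sub, map_sub, one_mulVec, re_dot_self,
      euclidean_norm_one _ (hM.1.eigenvectorBasis.orthonormal.1 i)] at h
    rw [hM.1.eigenvalues_eq]
    exact sub_nonneg.mp h
  have hdiag : hM.sqrt - M =
      (hM.1.eigenvectorUnitary : Matrix D D ℂ) *
        diagonal (RCLike.ofReal ∘ (fun i => Real.sqrt (hM.1.eigenvalues i) - hM.1.eigenvalues i)) *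
        (star hM.1.eigenvectorUnitary : Matrix D D ℂ) := by
    have h2 : (hM.1.eigenvectorUnitary : Matrix D D ℂ) *
        diagonal (RCLike.ofReal ∘ hM.1.eigenvalues) *
        (star hM.1.eigenvectorUnitary : Matrix D D ℂ) = M := hM.1.spectral_theorem_old
    calc hM.sqrt - M
        = (hM.1.eigenvectorUnitary : Matrix D D ℂ) *
            diagonal (RCLike.ofReal ∘ Real.sqrt ∘ hM.1.eigenvalues) *
            (star hM.1.eigenvectorUnitary : Matrix D D ℂ)
          - (hM.1.eigenvectorUnitary : Matrix D D ℂ) *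
            diagonal (RCLike.ofReal ∘ hM.1.eigenvalues) *
            (star hM.1.eigenvectorUnitary : Matrix D D ℂ) := by
          rw [Matrix.PosSemidef.sqrt, h2]
      _ = (hM.1.eigenvectorUnitary : Matrix D D ℂ) *
            (diagonal (RCLike.ofReal ∘ Real.sqrt ∘ hM.1.eigenvalues)
              - diagonal (RCLike.ofReal ∘ hM.1.eigenvalues)) *
            (star hM.1.eigenvectorUnitary : Matrix D D ℂ) := by
          rw [Matrix.mul_sub, Matrix.sub_mul]
      _ = _ := by
          have hfun : (fun i => (RCLike.ofReal ∘ Real.sqrt ∘ hM.1.eigenvalues) i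
              - (RCLike.ofReal ∘ hM.1.eigenvalues) i : D → ℂ)
              = RCLike.ofReal ∘ (fun i => Real.sqrt (hM.1.eigenvalues i) - hM.1.eigenvalues i) := by
            funext i; simp
          rw [diagonal_sub, hfun]
  rw [hdiag]
  refine PosSemidef.mul_mul_conjTranspose_same (PosSemidef.diagonal ?_) _
  intro i
  simp only [Function.comp_apply, Pi.zero_apply]
  rw [RCLike.ofReal_nonneg, sub_nonneg]
  have h0 := hM.eigenvalues_nonneg i
  nlinarith [Real.sq_sqrt h0, Real.sqrt_nonneg (hM.1.eigenvalues i), key i]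

lemma key_estimate {V : Type*} [NormedAddCommGroup V] [InnerProductSpace ℂ V]
    (x y z : V) (hx : ‖x‖ = 1) (hy : ‖y‖ = 1) (hz : ‖z‖ ≤ 1) (t : ℝ)
    (ht : t ≤ (inner ℂ z x).re) :
    t - Real.sqrt 2 * Real.sqrt (1 - ‖(inner ℂ x y)‖^2) ≤ ‖(inner ℂ z y)‖ := by
  set c : ℂ := inner ℂ x y with hc
  set f : ℝ := ‖c‖ with hfdef
  have hf1 : f ≤ 1 := by
    have := norm_inner_le_norm (𝕜 := ℂ) x y
    rwa [hx, hy, one_mul] at this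
  have hf0 : (0:ℝ) ≤ f := norm_nonneg _
  set β : ℂ := if c = 0 then 1 else (starRingEnd ℂ) c / f with hβdef
  have hβ : ‖β‖ = 1 := by
    rw [hβdef]
    split_ifs with h
    · simp
    · have hfne : f ≠ 0 := by simpa [hfdef, norm_eq_zero] using h
      rw [norm_div, RCLike.norm_conj]
      rw [hfdef, Complex.norm_real, norm_norm]
      exact div_self (norm_ne_zero_iff.mpr h)
  set φ : V := β • y with hφ
  have hφnorm : ‖φ‖ = 1 := by rw [hφ, norm_smul, hβ, hy, one_mul]
  have hxφ : (inner ℂ x φ) = (f : ℂ) := by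
    rw [hφ, inner_smul_right, ← hc, hβdef]
    split_ifs with h
    · simp [h, hfdef]
    · have hfne : (f:ℝ) ≠ 0 := by simpa [hfdef, norm_eq_zero] using h
      have h1 : (starRingEnd ℂ) c * c = (f:ℂ) * f := by
        rw [← Complex.normSq_eq_conj_mul_self, hfdef, Complex.normSq_eq_norm_sq]
        push_cast; ring
      field_simp
      linear_combination h1
  -- distance bound
  have hdist : ‖φ - x‖^2 = 2 - 2*f := by
    rw [@norm_sub_sq ℂ, hφnorm, hx]
    have h7 : RCLike.re (inner ℂ φ x) = f := by
      rw [← inner_conj_symm φ x, hxφ]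
      simp
    rw [h7]; ring
  have hdist' : ‖φ - x‖ ≤ Real.sqrt 2 * Real.sqrt (1 - f^2) := by
    have h2 : ‖φ - x‖ = Real.sqrt (2 - 2*f) := by
      rw [← hdist, Real.sqrt_sq (norm_nonneg _)]
    rw [h2, ← Real.sqrt_mul (by norm_num : (0:ℝ) ≤ 2)]
    apply Real.sqrt_le_sqrt
    nlinarith
  -- main chain
  have hzy : ‖(inner ℂ z y)‖ = ‖(inner ℂ z φ)‖ := by
    rw [hφ, inner_smul_right, norm_mul, hβ, one_mul]
  have hsplit : (inner ℂ z φ) = inner ℂ z x + inner ℂ z (φ - x) := by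
    rw [inner_sub_right]; ring
  have hre : t - ‖z‖ * ‖φ - x‖ ≤ (inner ℂ z φ).re := by
    rw [hsplit, Complex.add_re]
    have h3 : ‖(inner ℂ z (φ - x))‖ ≤ ‖z‖ * ‖φ - x‖ := norm_inner_le_norm z (φ - x)
    have h4 : -(‖z‖ * ‖φ - x‖) ≤ (inner ℂ z (φ - x)).re := by
      have := Complex.abs_re_le_norm (inner ℂ z (φ - x))
      have h5 : |(inner ℂ z (φ - x)).re| ≤ ‖z‖ * ‖φ - x‖ := le_trans this h3
      linarith [abs_le.mp h5 |>.1]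
    linarith
  have hfin : t - Real.sqrt 2 * Real.sqrt (1 - f^2) ≤ (inner ℂ z φ).re := by
    have h6 : ‖z‖ * ‖φ - x‖ ≤ ‖φ - x‖ := by
      have := mul_le_of_le_one_left (norm_nonneg (φ - x)) hz
      linarith [mul_comm ‖z‖ ‖φ - x‖ ▸ this]
    have := hdist'
    nlinarith [norm_nonneg (φ - x), norm_nonneg z]
  calc t - Real.sqrt 2 * Real.sqrt (1 - f^2) ≤ (inner ℂ z φ).re := hfin
    _ ≤ ‖(inner ℂ z φ)‖ := Complex.re_le_norm _
    _ = ‖(inner ℂ z y)‖ := hzy.symm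

omit [DecidableEq D] [DecidableEq E] in
lemma embed_dot {κ : ℕ} (k : Fin κ)
    (v : D × E → ℂ) (w : ((D × Fin κ) × E) → ℂ) :
    star (fun p : (D × Fin κ) × E => if p.1.2 = k then v (p.1.1, p.2) else 0) ⬝ᵥ w
      = star v ⬝ᵥ (fun q : D × E => w ((q.1, k), q.2)) := by
  simp only [dotProduct, Pi.star_apply, Fintype.sum_prod_type, apply_ite (star : ℂ → ℂ),
    star_zero, ite_mul, zero_mul, Finset.sum_ite_irrel, Finset.sum_const_zero,
    Finset.sum_ite_eq', Finset.mem_univ, if_true]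

omit [Fintype D] [Fintype E] [DecidableEq D] [DecidableEq E] in
lemma sub_kron (A B : Matrix D D ℂ) (C : Matrix E E ℂ) :
    (A - B) ⊗ₖ C = A ⊗ₖ C - B ⊗ₖ C := by
  ext ⟨a,b⟩ ⟨c,d⟩
  simp [kroneckerMap_apply, sub_mul]

omit [DecidableEq D] in
lemma psd_sum {ι : Type*} (s : Finset ι) (f : ι → Matrix D D ℂ)
    (h : ∀ i ∈ s, (f i).PosSemidef) : (∑ i ∈ s, f i).PosSemidef := by
  classical
  induction s using Finset.induction with
  | empty => simpa using Matrix.PosSemidef.zero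
  | @insert a s ha ih =>
    rw [Finset.sum_insert ha]
    exact (h a (Finset.mem_insert_self a s)).add (ih fun i hi => h i (Finset.mem_insert_of_mem hi))

lemma ev_norm_eq_one {n : Type*} [Fintype n] (v : n → ℂ)
    (h : ∑ i, Complex.normSq (v i) = 1) :
    ‖((WithLp.equiv 2 (n → ℂ)).symm v : EuclideanSpace ℂ n)‖ = 1 := by
  have h2 : RCLike.re (inner ℂ ((WithLp.equiv 2 (n → ℂ)).symm v)
      ((WithLp.equiv 2 (n → ℂ)).symm v)) = 1 := by
    rw [EuclideanSpace.inner_piLp_equiv_symm, re_dot_self, h]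
  rw [inner_self_eq_norm_sq] at h2
  nlinarith [norm_nonneg ((WithLp.equiv 2 (n → ℂ)).symm v : EuclideanSpace ℂ n)]

lemma ev_norm_le_one {n : Type*} [Fintype n] (v : n → ℂ)
    (h : RCLike.re ((star v : n → ℂ) ⬝ᵥ v) ≤ 1) :
    ‖((WithLp.equiv 2 (n → ℂ)).symm v : EuclideanSpace ℂ n)‖ ≤ 1 := by
  have h2 : RCLike.re (inner ℂ ((WithLp.equiv 2 (n → ℂ)).symm v)
      ((WithLp.equiv 2 (n → ℂ)).symm v)) ≤ 1 := by
    rwa [EuclideanSpace.inner_piLp_equiv_symm]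
  rw [inner_self_eq_norm_sq] at h2
  nlinarith [norm_nonneg ((WithLp.equiv 2 (n → ℂ)).symm v : EuclideanSpace ℂ n)]

end Aux

lemma dot_shift {n : Type*} [Fintype n] (M : Matrix n n ℂ) (hM : M.IsHermitian) (a b : n → ℂ) :
    star (M *ᵥ a) ⬝ᵥ b = star a ⬝ᵥ (M *ᵥ b) := by
  rw [star_mulVec, ← dotProduct_mulVec, hM.eq]

/-- Coherification lemma: given a pure state `ψ` on `D ⊗ E`, unitaries `U k` on `D` with
`ψ_k = (U k ⊗ 1)ψ`, arbitrary pure states `ψ'_k` and a POVM `{Λ k}` on `D`, there are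
phases `α k` such that the isometry `ℒ = Σ_k (α_k U_k† √Λ_k) ⊗ |k⟩` satisfies
`(1/κ) Σ_k Re⟨k|⟨ψ|ℒ|ψ'_k⟩ ≥ 1 - 2(P + √(1-F))` where
`P = 1 - (1/κ) Σ_k Tr(ψ_k Λ_k)` and `F = (1/κ) Σ_k |⟨ψ_k|ψ'_k⟩|²`. -/
theorem coherification {D E : Type*} [Fintype D] [Fintype E] [DecidableEq D] [DecidableEq E]
    (κ : ℕ) (hκ : 0 < κ)
    (ψ : D × E → ℂ) (hψ : ∑ p, Complex.normSq (ψ p) = 1)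
    (U : Fin κ → Matrix D D ℂ) (hU : ∀ k, U k ∈ Matrix.unitaryGroup D ℂ)
    (ψ' : Fin κ → D × E → ℂ) (hψ' : ∀ k, ∑ p, Complex.normSq (ψ' k p) = 1)
    (Λ : Fin κ → Matrix D D ℂ) (hΛ : ∀ k, (Λ k).PosSemidef)
    (hΛ1 : ∑ k, Λ k = 1) :
    -- the rotated states `ψ_k = (U_k ⊗ 1)ψ`
    let ψk : Fin κ → D × E → ℂ := fun k => (U k ⊗ₖ (1 : Matrix E E ℂ)) *ᵥ ψ
    -- `P` and `F`
    let P : ℝ := 1 - (1 / κ : ℝ) *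
      ∑ k, (star (ψk k) ⬝ᵥ ((Λ k ⊗ₖ (1 : Matrix E E ℂ)) *ᵥ ψk k)).re
    let F : ℝ := (1 / κ : ℝ) * ∑ k, ‖star (ψk k) ⬝ᵥ ψ' k‖ ^ 2
    ∃ α : Fin κ → ℂ, (∀ k, ‖α k‖ = 1) ∧
      -- `ℒ = Σ_k (α_k U_k† √Λ_k) ⊗ |k⟩` as a matrix from `D` to `D ⊗ K`
      let L : Matrix (D × Fin κ) D ℂ := Matrix.of fun p d' =>
        α p.2 * (((U p.2)ᴴ * (hΛ p.2).sqrt) p.1 d')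
      1 - 2 * (P + Real.sqrt (1 - F)) ≤ (1 / κ : ℝ) *
        ∑ k, ((star (fun p : (D × Fin κ) × E => if p.1.2 = k then ψ (p.1.1, p.2) else 0)
          ⬝ᵥ ((L ⊗ₖ (1 : Matrix E E ℂ)) *ᵥ ψ' k)).re) := by
  intro ψk P F
  classical
  have hκpos : (0:ℝ) < κ := by exact_mod_cast hκ
  have hκne : (κ:ℝ) ≠ 0 := ne_of_gt hκpos
  set S : Fin κ → Matrix (D × E) (D × E) ℂ :=
    fun k => (hΛ k).sqrt ⊗ₖ (1 : Matrix E E ℂ) with hS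
  set c : Fin κ → ℂ := fun k => star (ψk k) ⬝ᵥ (S k *ᵥ ψ' k) with hcdef
  set A : Fin κ → ℂ :=
    fun k => if c k = 0 then 1 else (starRingEnd ℂ) (c k) / ((‖c k‖ : ℝ) : ℂ) with hA
  have hAone : ∀ k, ‖A k‖ = 1 := by
    intro k
    rw [hA]
    dsimp only
    split_ifs with h
    · simp
    · rw [norm_div, RCLike.norm_conj, Complex.norm_real, norm_norm]
      exact div_self (norm_ne_zero_iff.mpr h)
  have hAc : ∀ k, A k * c k = ((‖c k‖ : ℝ) : ℂ) := by
    intro k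
    rw [hA]
    dsimp only
    split_ifs with h
    · simp [h]
    · have habs : ((‖c k‖ : ℝ) : ℂ) ≠ 0 := by
        simpa using norm_ne_zero_iff.mpr h
      field_simp
      rw [mul_comm, Complex.mul_conj, Complex.normSq_eq_norm_sq]
      push_cast
      ring
  refine ⟨A, hAone, ?_⟩
  intro L
  -- basic facts
  have hUU : ∀ k, ((U k)ᴴ ⊗ₖ (1 : Matrix E E ℂ)) * (U k ⊗ₖ (1 : Matrix E E ℂ)) = 1 := by
    intro k
    rw [← mul_kronecker_mul, one_mul, ← Matrix.star_eq_conjTranspose,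
      (Matrix.mem_unitaryGroup_iff'.mp (hU k)), one_kronecker_one]
  have hstarψk : ∀ k, star (ψk k) = star ψ ᵥ* ((U k)ᴴ ⊗ₖ (1 : Matrix E E ℂ)) := by
    intro k
    show star ((U k ⊗ₖ (1 : Matrix E E ℂ)) *ᵥ ψ) = _
    rw [star_mulVec, kron_conjT, conjTranspose_one]
  have hxx : ∀ k, star (ψk k) ⬝ᵥ ψk k = star ψ ⬝ᵥ ψ := by
    intro k
    show star (ψk k) ⬝ᵥ ((U k ⊗ₖ (1 : Matrix E E ℂ)) *ᵥ ψ) = _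
    rw [hstarψk k, dotProduct_mulVec, vecMul_vecMul, hUU k, vecMul_one]
  have hxsum : ∀ k, ∑ p, Complex.normSq (ψk k p) = 1 := by
    intro k
    rw [← re_dot_self, hxx k, re_dot_self, hψ]
  have hSH : ∀ k, (S k).IsHermitian := by
    intro k
    show ((hΛ k).sqrt ⊗ₖ (1 : Matrix E E ℂ))ᴴ = _
    rw [kron_conjT, conjTranspose_one, (hΛ k).posSemidef_sqrt.1.eq]
  have hSS : ∀ k, S k * S k = Λ k ⊗ₖ (1 : Matrix E E ℂ) := by
    intro k
    show ((hΛ k).sqrt ⊗ₖ (1 : Matrix E E ℂ)) * ((hΛ k).sqrt ⊗ₖ (1 : Matrix E E ℂ)) = _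
    rw [← mul_kronecker_mul, (hΛ k).sqrt_mul_self, one_mul]
  have h1Λ : ∀ k, (1 - Λ k).PosSemidef := by
    intro k
    have he : 1 - Λ k = ∑ j ∈ Finset.univ.erase k, Λ j := by
      rw [← hΛ1]
      exact (eq_sub_of_add_eq (Finset.sum_erase_add _ _ (Finset.mem_univ k))).symm
    rw [he]
    exact psd_sum _ _ fun j _ => hΛ j
  -- t and f
  set t : Fin κ → ℝ :=
    fun k => (star (ψk k) ⬝ᵥ ((Λ k ⊗ₖ (1 : Matrix E E ℂ)) *ᵥ ψk k)).re with ht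
  set f : Fin κ → ℝ := fun k => ‖star (ψk k) ⬝ᵥ ψ' k‖ with hf
  have hP : P = 1 - (1/κ : ℝ) * ∑ k, t k := rfl
  have hF : F = (1/κ : ℝ) * ∑ k, f k ^ 2 := rfl
  have ht0 : ∀ k, 0 ≤ t k := by
    intro k
    have := (kron_one_psd (hΛ k)).re_dotProduct_nonneg (ψk k)
    simpa [ht] using this
  have ht1 : ∀ k, t k ≤ 1 := by
    intro k
    have h := (kron_one_psd (h1Λ k)).re_dotProduct_nonneg (ψk k)
    rw [sub_kron, one_kronecker_one, sub_mulVec, one_mulVec, dotProduct_sub, map_sub,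
      hxx k, re_dot_self, hψ] at h
    simp only [RCLike.re_to_complex] at h
    simp only [ht]
    linarith
  have hf0 : ∀ k, 0 ≤ f k := fun k => norm_nonneg _
  -- the per-k estimate
  have hzz : ∀ k, star (S k *ᵥ ψk k) ⬝ᵥ (S k *ᵥ ψk k)
      = star (ψk k) ⬝ᵥ ((Λ k ⊗ₖ (1 : Matrix E E ℂ)) *ᵥ ψk k) := by
    intro k
    rw [dot_shift _ (hSH k), mulVec_mulVec, hSS k]
  have hzyc : ∀ k, star (S k *ᵥ ψk k) ⬝ᵥ ψ' k = c k := by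
    intro k
    rw [dot_shift _ (hSH k), hcdef]
  have hzx : ∀ k, star (S k *ᵥ ψk k) ⬝ᵥ ψk k = star (ψk k) ⬝ᵥ (S k *ᵥ ψk k) :=
    fun k => dot_shift _ (hSH k) _ _
  have hkey : ∀ k, t k - Real.sqrt 2 * Real.sqrt (1 - f k ^ 2) ≤ ‖c k‖ := by
    intro k
    have hx1 : ‖((WithLp.equiv 2 (D × E → ℂ)).symm (ψk k) : EuclideanSpace ℂ (D × E))‖ = 1 :=
      ev_norm_eq_one _ (hxsum k)
    have hy1 : ‖((WithLp.equiv 2 (D × E → ℂ)).symm (ψ' k) : EuclideanSpace ℂ (D × E))‖ = 1 :=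
      ev_norm_eq_one _ (hψ' k)
    have hz1 : ‖((WithLp.equiv 2 (D × E → ℂ)).symm (S k *ᵥ ψk k) :
        EuclideanSpace ℂ (D × E))‖ ≤ 1 := by
      apply ev_norm_le_one
      rw [hzz k]
      simp only [RCLike.re_to_complex]
      exact ht1 k
    have htx : t k ≤ (inner ℂ ((WithLp.equiv 2 (D × E → ℂ)).symm (S k *ᵥ ψk k))
        ((WithLp.equiv 2 (D × E → ℂ)).symm (ψk k))).re := by
      rw [EuclideanSpace.inner_piLp_equiv_symm, hzx k]
      have h := (kron_one_psd (E := E) (sqrt_sub_psd (hΛ k) (h1Λ k))).re_dotProduct_nonneg (ψk k)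
      rw [sub_kron, sub_mulVec, dotProduct_sub, map_sub] at h
      simp only [RCLike.re_to_complex] at h
      simp only [ht, hS]
      linarith
    have hk0 := key_estimate _ _ _ hx1 hy1 hz1 (t k) htx
    rw [EuclideanSpace.inner_piLp_equiv_symm, EuclideanSpace.inner_piLp_equiv_symm,
      hzyc k] at hk0
    simpa [hf] using hk0
  -- f ≤ 1
  have hf1 : ∀ k, f k ≤ 1 := by
    intro k
    have h := norm_inner_le_norm (𝕜 := ℂ)
      ((WithLp.equiv 2 (D × E → ℂ)).symm (ψk k)) ((WithLp.equiv 2 (D × E → ℂ)).symm (ψ' k))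
    rw [EuclideanSpace.inner_piLp_equiv_symm, ev_norm_eq_one _ (hxsum k),
      ev_norm_eq_one _ (hψ' k), one_mul] at h
    simpa [hf] using h
  -- evaluating the given dot products
  have hbig : ∀ k, (star (fun p : (D × Fin κ) × E => if p.1.2 = k then ψ (p.1.1, p.2) else 0)
      ⬝ᵥ ((L ⊗ₖ (1 : Matrix E E ℂ)) *ᵥ ψ' k)) = A k * c k := by
    intro k
    rw [embed_dot]
    have hL : L = Matrix.of fun p d' => A p.2 * (((U p.2)ᴴ * (hΛ p.2).sqrt) p.1 d') := rfl
    have h1 : (fun q : D × E => ((L ⊗ₖ (1 : Matrix E E ℂ)) *ᵥ ψ' k) ((q.1, k), q.2))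
        = A k • ((((U k)ᴴ * (hΛ k).sqrt) ⊗ₖ (1 : Matrix E E ℂ)) *ᵥ ψ' k) := by
      funext q
      simp only [hL, Matrix.mulVec, dotProduct, kroneckerMap_apply, Matrix.of_apply,
        Pi.smul_apply, smul_eq_mul, Finset.mul_sum]
      refine Finset.sum_congr rfl fun p _ => ?_
      ring
    rw [h1, dotProduct_smul, smul_eq_mul]
    congr 1
    have h2 : ((U k)ᴴ * (hΛ k).sqrt) ⊗ₖ (1 : Matrix E E ℂ)
        = ((U k)ᴴ ⊗ₖ (1 : Matrix E E ℂ)) * ((hΛ k).sqrt ⊗ₖ (1 : Matrix E E ℂ)) := by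
      rw [← mul_kronecker_mul, one_mul]
    rw [h2, ← mulVec_mulVec, dotProduct_mulVec, ← hstarψk k]
  have hsumeq : ∑ k, ((star (fun p : (D × Fin κ) × E =>
        if p.1.2 = k then ψ (p.1.1, p.2) else 0)
      ⬝ᵥ ((L ⊗ₖ (1 : Matrix E E ℂ)) *ᵥ ψ' k)).re) = ∑ k, ‖c k‖ := by
    refine Finset.sum_congr rfl fun k _ => ?_
    rw [hbig k, hAc k, Complex.ofReal_re]
  rw [hsumeq]
  -- final arithmetic
  have h2k : ∀ k, (0:ℝ) ≤ 1 - f k ^ 2 := by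
    intro k
    nlinarith [hf0 k, hf1 k]
  set G : ℝ := ∑ k, Real.sqrt (1 - f k ^ 2) with hG
  have hG0 : 0 ≤ G := Finset.sum_nonneg fun k _ => Real.sqrt_nonneg _
  have hsum1 : ∑ k, t k - Real.sqrt 2 * G ≤ ∑ k, ‖c k‖ := by
    have h := Finset.sum_le_sum (fun k (_ : k ∈ Finset.univ) => hkey k)
    rw [Finset.sum_sub_distrib, ← Finset.mul_sum] at h
    exact h
  have hsumfF : ∑ k, (1 - f k ^ 2) = (κ:ℝ) * (1 - F) := by
    rw [Finset.sum_sub_distrib, Finset.sum_const, Finset.card_univ, Fintype.card_fin,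
      nsmul_eq_mul, mul_one, hF]
    field_simp
  have hG2 : G ^ 2 ≤ (κ:ℝ) * ((κ:ℝ) * (1 - F)) := by
    have h := sq_sum_le_card_mul_sum_sq (s := Finset.univ)
      (f := fun k : Fin κ => Real.sqrt (1 - f k ^ 2))
    simp only [Finset.card_univ, Fintype.card_fin] at h
    have h2 : ∑ k, Real.sqrt (1 - f k ^ 2) ^ 2 = ∑ k, (1 - f k ^ 2) :=
      Finset.sum_congr rfl fun k _ => Real.sq_sqrt (h2k k)
    rw [hG, ← hsumfF, ← h2]
    exact_mod_cast h
  have hF1 : 0 ≤ 1 - F := by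
    have hnn : 0 ≤ ∑ k, (1 - f k ^ 2) := Finset.sum_nonneg fun k _ => h2k k
    rw [hsumfF] at hnn
    have h := div_nonneg hnn hκpos.le
    rwa [mul_div_cancel_left₀ _ hκne] at h
  have hGle : G ≤ (κ:ℝ) * Real.sqrt (1 - F) := by
    have h1 : G ^ 2 ≤ ((κ:ℝ) * Real.sqrt (1 - F)) ^ 2 := by
      have : ((κ:ℝ) * Real.sqrt (1 - F)) ^ 2 = (κ:ℝ) * ((κ:ℝ) * (1 - F)) := by
        rw [mul_pow, Real.sq_sqrt hF1]; ring
      rw [this]; exact hG2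
    have h2 : 0 ≤ (κ:ℝ) * Real.sqrt (1 - F) := by positivity
    nlinarith
  have hsqrt2 : Real.sqrt 2 ≤ 2 := by
    nlinarith [Real.sq_sqrt (by norm_num : (0:ℝ) ≤ 2), Real.sqrt_nonneg 2]
  have hsqrt20 : 0 ≤ Real.sqrt 2 := Real.sqrt_nonneg 2
  have hsF0 : 0 ≤ Real.sqrt (1 - F) := Real.sqrt_nonneg _
  have hP0 : 0 ≤ P := by
    rw [hP]
    have hTle : ∑ k, t k ≤ (κ:ℝ) := by
      calc ∑ k, t k ≤ ∑ _k : Fin κ, (1:ℝ) := Finset.sum_le_sum fun k _ => ht1 k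
        _ = κ := by simp
    rw [sub_nonneg]
    rw [div_mul_eq_mul_div, one_mul, div_le_one hκpos]
    exact hTle
  have hCs : ∑ k, t k - Real.sqrt 2 * ((κ:ℝ) * Real.sqrt (1 - F)) ≤ ∑ k, ‖c k‖ := by
    nlinarith
  calc 1 - 2 * (P + Real.sqrt (1 - F))
      ≤ (1 - P) - Real.sqrt 2 * Real.sqrt (1 - F) := by nlinarith
    _ = (1/κ : ℝ) * (∑ k, t k) - Real.sqrt 2 * Real.sqrt (1 - F) := by
        rw [hP]; ring
    _ ≤ (1/κ : ℝ) * ∑ k, ‖c k‖ := by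
        have hmul := mul_le_mul_of_nonneg_left hCs
          (le_of_lt (by positivity : (0:ℝ) < 1/κ))
        have heq : (1/κ : ℝ) * (∑ k, t k - Real.sqrt 2 * ((κ:ℝ) * Real.sqrt (1 - F)))
            = (1/κ : ℝ) * (∑ k, t k) - Real.sqrt 2 * Real.sqrt (1 - F) := by
          field_simp
        linarith
end
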